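/- arXiv:2511.04374 — 8 statements merged into one kernel-verified Lean document; each statement's English description precedes it below -/
import Mathlib

section
/- Let k ≥ 3 and n ≥ 2k+1 be integers, and let G be an edge-colored graph on n vertices obtained from the complete graph K_n by deleting at most one edge. Suppose G has a rainbow representative subgraph H that is isomorphic to the disjoint union of a complete graph K_{2k−3}, a complete graph K_3, and n−2k isolated vertices. Then G contains a rainbow matching of size k. -/
/-- `G` (with edge-coloring `c`) contains a rainbow matching of size `k`:
`k` pairwise vertex-disjoint edges of `G` with pairwise distinct colors. -/
def HasRainbowMatching {V α : Type*} (G : SimpleGraph V) (c : Sym2 V → α) (k : ℕ) : Prop :=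
  ∃ M : Finset (Sym2 V), M.card = k ∧ ↑M ⊆ G.edgeSet ∧
    (∀ e ∈ M, ∀ f ∈ M, e ≠ f → ∀ v : V, v ∈ e → v ∉ f) ∧
    Set.InjOn c ↑M

/-- `H` is a rainbow representative subgraph of the edge-colored graph `(G, c)`:
`H` is a (spanning) subgraph of `G`, its edges have pairwise distinct colors, and every
edge of `G` has the same color as some edge of `H` (one edge chosen per color class). -/
def IsRainbowRepresentative {V α : Type*} (G H : SimpleGraph V) (c : Sym2 V → α) : Prop :=
  H ≤ G ∧ Set.InjOn c H.edgeSet ∧ ∀ e ∈ G.edgeSet, ∃ f ∈ H.edgeSet, c e = c f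

/-!
Fix a vertex `x` outside `A ∪ B`. Each edge of `G` has the colour of exactly one edge of `H`,
its representative, so a matching is rainbow as soon as the representatives of its edges are
distinct.

For `k ≥ 4` take `a ∈ A` with `xa ∈ G`, and let `f` be its representative. As
`|A \ {a}| = 2k - 4 ≥ 4`, the clique `A \ {a}` has a perfect matching avoiding `f`, and the
triangle `B` has an edge other than `f`; with `xa` this gives `k` edges of distinct colours.

For `k = 3` write `A = {a, a', a''}`, `B = {b, b', b''}` and assume there is no rainbow
3-matching. Then every edge `xv ∈ G` has the colour of the edge of `v`'s triangle opposite to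
`v`, since otherwise `xv`, that edge and an edge of the other triangle form one. For a cross
edge `ab ∈ G` with representative `g`, the matching `ab, xa', b'b''` forces `g ∈ {aa'', b'b''}`,
and likewise for `a''`, `b'`, `b''`. Since at most one edge `xv` is missing, these constraints
are incompatible.
-/

open Finset

section

variable {V α : Type*}

theorem SimpleGraph.adj_or_adj_of_ncard_compl_le_one [Finite V] {G : SimpleGraph V}
    (hG : Gᶜ.edgeSet.ncard ≤ 1) {u v u' v' : V} (h : u ≠ v) (h' : u' ≠ v')
    (hne : s(u, v) ≠ s(u', v')) : G.Adj u v ∨ G.Adj u' v' := by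
  by_contra! hnot
  have : 1 < Gᶜ.edgeSet.ncard := (Set.one_lt_ncard_iff (Set.toFinite _)).2
    ⟨_, _, (G.compl_adj u v).2 ⟨h, hnot.1⟩, (G.compl_adj u' v').2 ⟨h', hnot.2⟩, hne⟩
  omega

def IsMatchingIn (K : SimpleGraph V) (S : Set V) (M : Finset (Sym2 V)) : Prop :=
  ↑M ⊆ K.edgeSet ∧ (∀ e ∈ M, ∀ v ∈ e, v ∈ S) ∧
    (M : Set (Sym2 V)).Pairwise fun e f => ∀ v ∈ e, v ∉ f

namespace IsMatchingIn

variable {K K' G : SimpleGraph V} {S T : Set V} {M N : Finset (Sym2 V)} {u v : V}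

theorem empty : IsMatchingIn K S ∅ := by
  simp [IsMatchingIn]

theorem singleton (h : K.Adj u v) : IsMatchingIn K {u, v} {s(u, v)} := by
  simpa [IsMatchingIn] using h

theorem mono (hM : IsMatchingIn K S M) (hK : K ≤ K') (hS : S ⊆ T) : IsMatchingIn K' T M :=
  ⟨hM.1.trans (SimpleGraph.edgeSet_mono hK), fun e he w hw => hS (hM.2.1 e he w hw), hM.2.2⟩

theorem mk_notMem (hM : IsMatchingIn K S M) (hu : u ∉ S) : s(u, v) ∉ M :=
  fun h => hu (hM.2.1 _ h u (Sym2.mem_mk_left u v))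

theorem hasRainbowMatching {c : Sym2 V → α} (hM : IsMatchingIn G S M) (hc : Set.InjOn c M) :
    HasRainbowMatching G c #M :=
  ⟨M, rfl, hM.1, hM.2.2, hc⟩

variable [DecidableEq V]

theorem union (hM : IsMatchingIn K S M) (hN : IsMatchingIn K T N) (hST : Disjoint S T) :
    IsMatchingIn K (S ∪ T) (M ∪ N) := by
  refine ⟨by simpa [Set.union_subset_iff] using ⟨hM.1, hN.1⟩, ?_, ?_⟩
  · simp only [mem_union]
    rintro e (he | he) w hw
    exacts [Or.inl (hM.2.1 e he w hw), Or.inr (hN.2.1 e he w hw)]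
  · rw [coe_union, Set.pairwise_union]
    refine ⟨hM.2.2, hN.2.2, fun e he f hf _ => ⟨fun w hwe hwf => ?_, fun w hwf hwe => ?_⟩⟩ <;>
      exact hST.ne_of_mem (hM.2.1 e he w hwe) (hN.2.1 f hf w hwf) rfl

theorem card_union (hM : IsMatchingIn K S M) (hN : IsMatchingIn K T N) (hST : Disjoint S T) :
    #(M ∪ N) = #M + #N :=
  card_union_of_disjoint <| disjoint_left.2 fun e heM heN =>
    hST.ne_of_mem (hM.2.1 e heM _ e.out_fst_mem) (hN.2.1 e heN _ e.out_fst_mem) rfl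

end IsMatchingIn

theorem exists_isMatchingIn [DecidableEq V] {K : SimpleGraph V} :
    ∀ (t : ℕ) {S : Finset V}, K.IsClique (S : Set V) → 2 * t ≤ #S →
      ∃ M, #M = t ∧ IsMatchingIn K S M
  | 0, _, _, _ => ⟨∅, rfl, .empty⟩
  | t + 1, S, hS, ht => by
    obtain ⟨u, hu, v, hv, huv⟩ := one_lt_card.1 (by omega : 1 < #S)
    have hv' : v ∈ S.erase u := mem_erase.2 ⟨huv.symm, hv⟩
    have hsub : (S.erase u).erase v ⊆ S := (erase_subset _ _).trans (erase_subset _ _)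
    obtain ⟨M, hM, hMS⟩ := exists_isMatchingIn t (hS.subset (coe_subset.2 hsub))
      (by rw [card_erase_of_mem hv', card_erase_of_mem hu]; omega :
        2 * t ≤ #((S.erase u).erase v))
    have hdisj : Disjoint ({u, v} : Set V) ↑((S.erase u).erase v) := by simp
    refine ⟨{s(u, v)} ∪ M, ?_, ?_⟩
    · rw [(IsMatchingIn.singleton (hS hu hv huv)).card_union hMS hdisj, hM, card_singleton,
        add_comm]
    · exact ((IsMatchingIn.singleton (hS hu hv huv)).union hMS hdisj).mono le_rfl
        (Set.union_subset (by simp [Set.insert_subset_iff, hu, hv]) (coe_subset.2 hsub))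

theorem exists_isMatchingIn_notMem [DecidableEq V] {K : SimpleGraph V} {S : Finset V}
    (hS : K.IsClique (S : Set V)) {t : ℕ} (ht : 0 < t) (htS : 2 * t ≤ #S) (hS3 : 3 ≤ #S)
    (f : Sym2 V) : ∃ M, #M = t ∧ IsMatchingIn K S M ∧ f ∉ M := by
  induction f using Sym2.ind with | _ u w => ?_
  by_cases hu : u ∈ S
  · -- match `u` with a vertex `y ≠ w`, so that the edge `s(u, w)` is not used
    obtain ⟨y, hy, hyw⟩ := (S.erase u).exists_mem_ne (by rw [card_erase_of_mem hu]; omega) w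
    have hsub : (S.erase u).erase y ⊆ S := (erase_subset _ _).trans (erase_subset _ _)
    obtain ⟨M, hM, hMS⟩ := exists_isMatchingIn (t - 1) (hS.subset (coe_subset.2 hsub))
      (by rw [card_erase_of_mem hy, card_erase_of_mem hu]; omega)
    have huy : u ≠ y := fun h => (mem_erase.1 hy).1 h.symm
    have hdisj : Disjoint ({u, y} : Set V) ↑((S.erase u).erase y) := by simp
    have hsing := IsMatchingIn.singleton (hS hu (mem_erase.1 hy).2 huy)
    refine ⟨{s(u, y)} ∪ M, ?_, ?_, ?_⟩
    · rw [hsing.card_union hMS hdisj, hM, card_singleton]; omega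
    · exact (hsing.union hMS hdisj).mono le_rfl
        (Set.union_subset (by simp [Set.insert_subset_iff, hu, (mem_erase.1 hy).2])
          (coe_subset.2 hsub))
    · rw [mem_union, mem_singleton, Sym2.congr_right, not_or]
      exact ⟨fun h => hyw h.symm, hMS.mk_notMem (by simp)⟩
  · obtain ⟨M, hM, hMS⟩ := exists_isMatchingIn t hS htS
    exact ⟨M, hM, hMS, hMS.mk_notMem hu⟩

theorem hasRainbowMatching_three {G : SimpleGraph V} {c : Sym2 V → α} {u₁ v₁ u₂ v₂ u₃ v₃ : V}
    (hd : [u₁, v₁, u₂, v₂, u₃, v₃].Nodup) (h₁ : G.Adj u₁ v₁) (h₂ : G.Adj u₂ v₂)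
    (h₃ : G.Adj u₃ v₃) (h₁₂ : c s(u₁, v₁) ≠ c s(u₂, v₂)) (h₁₃ : c s(u₁, v₁) ≠ c s(u₃, v₃))
    (h₂₃ : c s(u₂, v₂) ≠ c s(u₃, v₃)) : HasRainbowMatching G c 3 := by
  classical
  refine ⟨{s(u₁, v₁), s(u₂, v₂), s(u₃, v₃)}, card_eq_three.2 ⟨_, _, _,
    ne_of_apply_ne c h₁₂, ne_of_apply_ne c h₁₃, ne_of_apply_ne c h₂₃, rfl⟩, ?_, ?_, ?_⟩
  · simp [Set.insert_subset_iff, h₁, h₂, h₃]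
  · simp only [mem_insert, mem_singleton]
    grind
  · simp [Set.InjOn, h₁₂, h₁₃, h₂₃, h₁₂.symm, h₁₃.symm, h₂₃.symm]

namespace IsRainbowRepresentative

variable {G H : SimpleGraph V} {c : Sym2 V → α}

theorem injOn_insert [DecidableEq V] (hrep : IsRainbowRepresentative G H c)
    {Q : Finset (Sym2 V)} (hQ : ↑Q ⊆ H.edgeSet) {e f : Sym2 V} (hf : f ∈ H.edgeSet)
    (hfQ : f ∉ Q) (hc : c e = c f) : Set.InjOn c ↑(insert e Q) := by
  have hrepQ : ∀ g ∈ Q, c g ≠ c f := fun g hg hcg => hfQ (hrep.2.1 (hQ hg) hf hcg ▸ hg)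
  have heQ : e ∉ Q := fun he => hrepQ e he hc
  rw [coe_insert, Set.injOn_insert (by simpa using heQ)]
  exact ⟨hrep.2.1.mono hQ, fun ⟨g, hg, hcg⟩ => hrepQ g hg (hcg.trans hc)⟩

theorem hasRainbowMatching_insert [DecidableEq V] (hrep : IsRainbowRepresentative G H c)
    {T : Set V} {Q : Finset (Sym2 V)} (hQ : IsMatchingIn H T Q) {x a : V} (hxa : G.Adj x a)
    (hx : x ∉ T) (ha : a ∉ T) {f : Sym2 V} (hf : f ∈ H.edgeSet) (hc : c s(x, a) = c f)
    (hfQ : f ∉ Q) : HasRainbowMatching G c (#Q + 1) := by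
  have hdisj : Disjoint ({x, a} : Set V) T := by simp [hx, ha]
  have hM := (IsMatchingIn.singleton hxa).union (hQ.mono hrep.1 le_rfl) hdisj
  have hcard := (IsMatchingIn.singleton hxa).card_union (hQ.mono hrep.1 le_rfl) hdisj
  rw [card_singleton, add_comm] at hcard
  rw [← hcard]
  exact hM.hasRainbowMatching (by simpa using hrep.injOn_insert hQ.1 hf hfQ hc)

theorem hasRainbowMatching_add_two [DecidableEq V] (hrep : IsRainbowRepresentative G H c)
    {S T : Finset V} (hS : H.IsClique (S : Set V)) (hT : H.IsClique (T : Set V))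
    (hST : Disjoint S T) (hT3 : 3 ≤ #T) {x a : V} (hxS : x ∉ S) (hxT : x ∉ T) (ha : a ∈ S)
    (hxa : G.Adj x a) {t : ℕ} (ht : 2 ≤ t) (htS : 2 * t + 1 ≤ #S) :
    HasRainbowMatching G c (t + 2) := by
  obtain ⟨f, hf, hc⟩ := hrep.2.2 s(x, a) hxa
  have hcard : #(S.erase a) = #S - 1 := card_erase_of_mem ha
  obtain ⟨P, hP, hPm, hfP⟩ := exists_isMatchingIn_notMem
    (hS.subset (coe_subset.2 (erase_subset a S))) (t := t) (by omega) (by omega) (by omega) f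
  obtain ⟨N, hN, hNm, hfN⟩ := exists_isMatchingIn_notMem hT (t := 1) one_pos (by omega) hT3 f
  have hdisj : Disjoint (↑(S.erase a) : Set V) ↑T :=
    disjoint_coe.2 (hST.mono_left (erase_subset a S))
  have hM := hrep.hasRainbowMatching_insert (hPm.union hNm hdisj) hxa (by simp [hxS, hxT])
    (by simp [disjoint_left.1 hST ha]) hf hc (by simp [hfP, hfN])
  rwa [hPm.card_union hNm hdisj, hP, hN] at hM

theorem color_ne (hrep : IsRainbowRepresentative G H c) {u v u' v' : V} (h : H.Adj u v)
    (h' : H.Adj u' v') (hne : s(u, v) ≠ s(u', v')) : c s(u, v) ≠ c s(u', v') :=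
  hrep.2.1.ne h h' hne

theorem color_eq_of_not_hasRainbowMatching_three (hrep : IsRainbowRepresentative G H c)
    (hno : ¬HasRainbowMatching G c 3) {x a u v b b' b'' : V}
    (hd : [x, a, u, v, b, b', b''].Nodup) (huv : H.Adj u v) (hB : H.IsClique {b, b', b''})
    (hxa : G.Adj x a) : c s(x, a) = c s(u, v) := by
  have hne := hd
  simp only [List.nodup_cons, List.mem_cons, List.not_mem_nil, List.nodup_nil, or_false, not_or,
    not_false_eq_true, and_true] at hne
  have hbb' : H.Adj b b' := hB (by simp) (by simp) (by grind)
  have hbb'' : H.Adj b b'' := hB (by simp) (by simp) (by grind)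
  by_contra hc
  by_cases h : c s(x, a) = c s(b, b')
  · refine hno (hasRainbowMatching_three (by grind) hxa (hrep.1 huv) (hrep.1 hbb'') hc ?_
      (hrep.color_ne huv hbb'' (by grind [Sym2.eq_iff])))
    rw [h]
    exact hrep.color_ne hbb' hbb'' (by grind [Sym2.eq_iff])
  · exact hno (hasRainbowMatching_three (by grind) hxa (hrep.1 huv) (hrep.1 hbb') hc h
      (hrep.color_ne huv hbb' (by grind [Sym2.eq_iff])))

theorem eq_or_eq_of_not_hasRainbowMatching_three (hrep : IsRainbowRepresentative G H c)
    (hno : ¬HasRainbowMatching G c 3) {x a a' a'' b b' b'' : V}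
    (hd : [x, a, a', a'', b, b', b''].Nodup) (hA : H.IsClique {a, a', a''})
    (hB : H.IsClique {b, b', b''}) (hab : G.Adj a b) {g : Sym2 V} (hg : g ∈ H.edgeSet)
    (hc : c s(a, b) = c g) (hxa' : G.Adj x a') : g = s(a, a'') ∨ g = s(b', b'') := by
  have hne := hd
  simp only [List.nodup_cons, List.mem_cons, List.not_mem_nil, List.nodup_nil, or_false, not_or,
    not_false_eq_true, and_true] at hne
  have haa'' : H.Adj a a'' := hA (by simp) (by simp) (by grind)
  have hb'b'' : H.Adj b' b'' := hB (by simp) (by simp) (by grind)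
  have hm : c s(x, a') = c s(a, a'') :=
    hrep.color_eq_of_not_hasRainbowMatching_three hno (by grind) haa'' hB hxa'
  by_contra! hg'
  refine hno (hasRainbowMatching_three (u₂ := x) (by grind) hab hxa' (hrep.1 hb'b'') ?_ ?_ ?_)
  · rw [hc, hm]
    exact hrep.2.1.ne hg haa'' hg'.1
  · rw [hc]
    exact hrep.2.1.ne hg hb'b'' hg'.2
  · rw [hm]
    exact hrep.color_ne haa'' hb'b'' (by grind [Sym2.eq_iff])

theorem hasRainbowMatching_three_of_isClique [Finite V] (hrep : IsRainbowRepresentative G H c)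
    (hG : Gᶜ.edgeSet.ncard ≤ 1) {x a a' a'' b b' b'' : V}
    (hd : [x, a, a', a'', b, b', b''].Nodup) (hA : H.IsClique {a, a', a''})
    (hB : H.IsClique {b, b', b''}) (hab : G.Adj a b) : HasRainbowMatching G c 3 := by
  have hne := hd
  simp only [List.nodup_cons, List.mem_cons, List.not_mem_nil, List.nodup_nil, or_false, not_or,
    not_false_eq_true, and_true] at hne
  by_contra hno
  obtain ⟨g, hg, hc⟩ := hrep.2.2 s(a, b) hab
  have hc' : c s(b, a) = c g := Sym2.eq_swap ▸ hc
  have hA' : H.IsClique {a, a'', a'} := by rwa [Set.pair_comm]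
  have hB' : H.IsClique {b, b'', b'} := by rwa [Set.pair_comm]
  have F₁ := hrep.eq_or_eq_of_not_hasRainbowMatching_three hno hd hA hB hab hg hc
  have F₂ := hrep.eq_or_eq_of_not_hasRainbowMatching_three hno (x := x) (by grind) hA' hB hab hg hc
  have F₃ := hrep.eq_or_eq_of_not_hasRainbowMatching_three hno (x := x) (a' := b') (b' := a')
    (by grind) hB hA hab.symm hg hc'
  have F₄ := hrep.eq_or_eq_of_not_hasRainbowMatching_three hno (x := x) (a' := b'') (b' := a')
    (by grind) hB' hA hab.symm hg hc'
  have hxA := G.adj_or_adj_of_ncard_compl_le_one hG (u := x) (v := a') (u' := x) (v' := a'')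
    (by grind) (by grind) (by grind [Sym2.eq_iff])
  have hxB := G.adj_or_adj_of_ncard_compl_le_one hG (u := x) (v := b') (u' := x) (v' := b'')
    (by grind) (by grind) (by grind [Sym2.eq_iff])
  by_cases hS : (g = s(a, a'') ∨ g = s(b', b'')) ∨ (g = s(a, a') ∨ g = s(b', b''))
  · have h₃ : ¬(g = s(b, b'') ∨ g = s(a', a'')) := by grind [Sym2.eq_iff]
    have h₄ : ¬(g = s(b, b') ∨ g = s(a', a'')) := by grind [Sym2.eq_iff]
    exact hxB.elim (fun h => h₃ (F₃ h)) (fun h => h₄ (F₄ h))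
  · exact hxA.elim (fun h => hS (.inl (F₁ h))) (fun h => hS (.inr (F₂ h)))

theorem hasRainbowMatching_three_of_ncard [Finite V] (hrep : IsRainbowRepresentative G H c)
    (hG : Gᶜ.edgeSet.ncard ≤ 1) {A B : Set V} (hA : A.ncard = 3) (hB : B.ncard = 3)
    (hAB : Disjoint A B) (hAc : H.IsClique A) (hBc : H.IsClique B) {x : V} (hx : x ∉ A ∪ B) :
    HasRainbowMatching G c 3 := by
  obtain ⟨a₁, a₂, a₃, h₁₂, h₁₃, h₂₃, rfl⟩ := Set.ncard_eq_three.1 hA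
  obtain ⟨b₁, b₂, b₃, h₁₂', h₁₃', h₂₃', rfl⟩ := Set.ncard_eq_three.1 hB
  have hd : [x, a₁, a₂, a₃, b₁, b₂, b₃].Nodup := by
    simp only [Set.disjoint_insert_left, Set.disjoint_insert_right, Set.disjoint_singleton,
      Set.mem_insert_iff, Set.mem_singleton_iff, Set.mem_union] at hAB hx
    simp only [List.nodup_cons, List.mem_cons, List.not_mem_nil, List.nodup_nil]
    grind
  have hBc' : H.IsClique {b₂, b₁, b₃} := by rwa [Set.insert_comm]
  rcases G.adj_or_adj_of_ncard_compl_le_one hG (u := a₁) (v := b₁) (u' := a₁) (v' := b₂)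
    (by grind) (by grind) (by grind [Sym2.eq_iff]) with h | h
  · exact hrep.hasRainbowMatching_three_of_isClique hG hd hAc hBc h
  · exact hrep.hasRainbowMatching_three_of_isClique hG (x := x) (by grind) hAc hBc' h

end IsRainbowRepresentative

end

/-- Lemma 3.2: if `k ≥ 3`, `n ≥ 2k+1`, `G` is an edge-colored graph on `n` vertices obtained
from `K_n` by deleting at most one edge, and `G` has a rainbow representative subgraph `H`
isomorphic to `K_{2k-3} ∪ K_3 ∪ \overline{K_{n-2k}}` (here described via two disjoint vertex
sets `A`, `B` of sizes `2k-3` and `3` spanning complete graphs, all other vertices isolated),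
then `G` contains a rainbow matching of size `k`. -/
theorem rainbow_matching_of_representative_K2km3_union_K3
    {V α : Type*} [Fintype V] (k n : ℕ) (hk : 3 ≤ k) (hn : 2 * k + 1 ≤ n)
    (hV : Fintype.card V = n)
    (G : SimpleGraph V) (hG : Gᶜ.edgeSet.ncard ≤ 1)
    (H : SimpleGraph V) (c : Sym2 V → α) (hrep : IsRainbowRepresentative G H c)
    (A B : Set V) (hA : A.ncard = 2 * k - 3) (hB : B.ncard = 3) (hAB : Disjoint A B)
    (hH : ∀ u v : V, H.Adj u v ↔
      (u ∈ A ∧ v ∈ A ∧ u ≠ v) ∨ (u ∈ B ∧ v ∈ B ∧ u ≠ v)) :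
    HasRainbowMatching G c k := by
  classical
  obtain ⟨x, -, hx⟩ := Set.exists_mem_notMem_of_ncard_lt_ncard (s := A ∪ B) (t := Set.univ)
    (by rw [Set.ncard_univ, Nat.card_eq_fintype_card, hV]; have := Set.ncard_union_le A B; omega)
  have hAc : H.IsClique A := fun u hu v hv huv => (hH u v).2 (.inl ⟨hu, hv, huv⟩)
  have hBc : H.IsClique B := fun u hu v hv huv => (hH u v).2 (.inr ⟨hu, hv, huv⟩)
  obtain rfl | hk4 := hk.eq_or_lt
  · exact hrep.hasRainbowMatching_three_of_ncard hG hA hB hAB hAc hBc hx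
  obtain ⟨u, w, hu, hw, huw⟩ := (Set.one_lt_ncard_iff A.toFinite).1 (by omega)
  have hxA : ∀ {v}, v ∈ A → x ≠ v := fun hv h => hx (.inl (h ▸ hv))
  obtain ⟨a, ha, hxa⟩ : ∃ a ∈ A, G.Adj x a :=
    (G.adj_or_adj_of_ncard_compl_le_one hG (hxA hu) (hxA hw) (by grind [Sym2.eq_iff])).elim
      (⟨u, hu, ·⟩) (⟨w, hw, ·⟩)
  have hM := hrep.hasRainbowMatching_add_two (S := A.toFinset) (T := B.toFinset) (t := k - 2)
    (by simpa) (by simpa) (by simpa) (by rw [← Set.ncard_eq_toFinset_card']; omega)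
    (by simpa using fun h => hx (.inl h)) (by simpa using fun h => hx (.inr h)) (by simpa) hxa
    (by omega) (by rw [← Set.ncard_eq_toFinset_card']; omega)
  rwa [Nat.sub_add_cancel (by omega)] at hM
end

section
/- Let k ≥ 2 and n ≥ 2k be integers. Let G be the complete graph on vertex set {1,…,n}, edge-colored so that each edge having at least one endpoint in {1,…,k−2} receives its own distinct color, and all edges with both endpoints in {k−1,…,n} receive one single common color different from all the others. Then c(G) = C(k−2,2) + (k−2)(n−k+2) + 1, so e(G) + c(G) = C(n,2) + C(k−2,2) + (k−2)(n−k+2) + 1, and G contains no rainbow matching of size k. -/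
lemma choose_two_add' (m r : ℕ) :
    (m + r).choose 2 = m.choose 2 + m * r + r.choose 2 := by
  induction r with
  | zero => simp
  | succ r ih =>
    have h1 : m + (r+1) = (m + r) + 1 := by ring
    rw [h1, Nat.choose_succ_succ, ih, Nat.choose_succ_succ r 1]
    simp [Nat.choose_one_right]
    ring


/-- Construction I: let `k ≥ 2`, `n ≥ 2k`, and color the complete graph on `Fin n` so that
every edge meeting the first `k-2` vertices gets its own distinct color (all different from a
fixed color `c0`) and all edges avoiding the first `k-2` vertices get the common color `c0`.
Then `c(G) = C(k-2,2) + (k-2)(n-k+2) + 1`, hence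
`e(G) + c(G) = C(n,2) + C(k-2,2) + (k-2)(n-k+2) + 1`, and there is no rainbow matching of
size `k`. -/
theorem constructionI
    {α : Type*} (k n : ℕ) (hk : 2 ≤ k) (hn : 2 * k ≤ n)
    (c : Sym2 (Fin n) → α) (c0 : α)
    (hinj : ∀ e ∈ (⊤ : SimpleGraph (Fin n)).edgeSet, ∀ f ∈ (⊤ : SimpleGraph (Fin n)).edgeSet,
      (∃ v ∈ e, (v : ℕ) < k - 2) → (∃ v ∈ f, (v : ℕ) < k - 2) → c e = c f → e = f)
    (hne : ∀ e ∈ (⊤ : SimpleGraph (Fin n)).edgeSet,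
      (∃ v ∈ e, (v : ℕ) < k - 2) → c e ≠ c0)
    (hc0 : ∀ e ∈ (⊤ : SimpleGraph (Fin n)).edgeSet,
      (∀ v ∈ e, k - 2 ≤ (v : ℕ)) → c e = c0) :
    (c '' (⊤ : SimpleGraph (Fin n)).edgeSet).ncard
        = (k - 2).choose 2 + (k - 2) * (n - k + 2) + 1 ∧
    (⊤ : SimpleGraph (Fin n)).edgeSet.ncard + (c '' (⊤ : SimpleGraph (Fin n)).edgeSet).ncard
        = n.choose 2 + ((k - 2).choose 2 + (k - 2) * (n - k + 2) + 1) ∧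
    ¬ HasRainbowMatching (⊤ : SimpleGraph (Fin n)) c k := by
  classical
  set m := k - 2 with hm
  set r := n - k + 2 with hrdef
  have hmr : m + r = n := by omega
  have hr2 : 2 ≤ r := by omega
  set E := (⊤ : SimpleGraph (Fin n)).edgeFinset with hE
  have hcoe : ((⊤ : SimpleGraph (Fin n)).edgeSet) = ↑E := by
    simp [hE]
  have hEcard : E.card = n.choose 2 := by
    rw [hE]
    have := SimpleGraph.card_edgeFinset_top_eq_card_choose_two (V := Fin n)
    simpa using this
  set P : Sym2 (Fin n) → Prop := fun e => ∃ v ∈ e, (v : ℕ) < m with hP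
  set S := E.filter P with hS
  set T := E.filter (fun e => ¬ P e) with hT
  have hTall : ∀ e ∈ T, ∀ v ∈ e, m ≤ (v : ℕ) := by
    intro e he v hv
    rw [hT, Finset.mem_filter] at he
    by_contra h
    exact he.2 ⟨v, hv, by omega⟩
  have hTcard : T.card = r.choose 2 := by
    have key : T.card = (⊤ : SimpleGraph (Fin r)).edgeFinset.card := by
      apply Finset.card_bij'
        (i := fun e (_ : e ∈ T) =>
          Sym2.map (fun (v : Fin n) => (⟨(v:ℕ) - m, by have := v.isLt; omega⟩ : Fin r)) e)
        (j := fun e (_ : e ∈ (⊤ : SimpleGraph (Fin r)).edgeFinset) =>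
          Sym2.map (fun (v : Fin r) => (⟨(v:ℕ) + m, by have := v.isLt; omega⟩ : Fin n)) e)
      · -- left inverse
        intro e he
        induction e using Sym2.ind with
        | _ a b =>
          have ha : m ≤ (a : ℕ) := hTall _ he a (by simp)
          have hb : m ≤ (b : ℕ) := hTall _ he b (by simp)
          simp only [Sym2.map_pair_eq]
          congr 1
          exacts [Fin.ext (by simp only [Fin.val_mk]; omega),
                 Fin.ext (by simp only [Fin.val_mk]; omega)]
      · -- right inverse
        intro e he
        induction e using Sym2.ind with
        | _ a b =>
          simp only [Sym2.map_pair_eq]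
          congr 1
          exacts [Fin.ext (by simp only [Fin.val_mk]; omega),
                 Fin.ext (by simp only [Fin.val_mk]; omega)]
      · -- i maps into target
        intro e he
        induction e using Sym2.ind with
        | _ a b =>
          have hab : a ≠ b := by
            have h2 := he
            rw [hT, Finset.mem_filter, SimpleGraph.mem_edgeFinset,
              SimpleGraph.mem_edgeSet] at h2
            exact h2.1.ne
          have ha : m ≤ (a : ℕ) := hTall _ he a (by simp)
          have hb : m ≤ (b : ℕ) := hTall _ he b (by simp)
          simp only [Sym2.map_pair_eq, SimpleGraph.mem_edgeFinset, SimpleGraph.mem_edgeSet,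
            SimpleGraph.top_adj, ne_eq]
          intro h
          apply hab
          have h' : (a:ℕ) - m = (b:ℕ) - m := by
            simpa using congrArg Fin.val h
          exact Fin.ext (by omega)
      · -- j maps into T
        intro e he
        induction e using Sym2.ind with
        | _ a b =>
          have hab : a ≠ b := by
            rw [SimpleGraph.mem_edgeFinset, SimpleGraph.mem_edgeSet] at he
            exact he.ne
          simp only [Sym2.map_pair_eq]
          rw [hT, Finset.mem_filter, SimpleGraph.mem_edgeFinset, SimpleGraph.mem_edgeSet]
          constructor
          · simp only [SimpleGraph.top_adj, ne_eq]
            intro h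
            apply hab
            have h' : (a:ℕ) + m = (b:ℕ) + m := by
              simpa using congrArg Fin.val h
            exact Fin.ext (by omega)
          · rintro ⟨v, hv, hvlt⟩
            rw [Sym2.mem_iff] at hv
            rcases hv with rfl | rfl <;> simp at hvlt
    rw [key]
    have := SimpleGraph.card_edgeFinset_top_eq_card_choose_two (V := Fin r)
    simpa using this
  have hST : S.card + T.card = E.card := Finset.card_filter_add_card_filter_not _
  have hScard : S.card = m.choose 2 + m * r := by
    have h2 := choose_two_add' m r
    rw [hmr] at h2
    omega
  -- image counting
  have hSsub : ∀ e ∈ S, e ∈ (⊤ : SimpleGraph (Fin n)).edgeSet ∧ P e := by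
    intro e he
    rw [hS, Finset.mem_filter, SimpleGraph.mem_edgeFinset] at he
    exact he
  have hTmem : ∀ e ∈ T, e ∈ (⊤ : SimpleGraph (Fin n)).edgeSet := by
    intro e he
    rw [hT, Finset.mem_filter, SimpleGraph.mem_edgeFinset] at he
    exact he.1
  have himgS : (S.image c).card = S.card := by
    apply Finset.card_image_of_injOn
    intro e he f hf hcef
    obtain ⟨he1, he2⟩ := hSsub e (Finset.mem_coe.mp he)
    obtain ⟨hf1, hf2⟩ := hSsub f (Finset.mem_coe.mp hf)
    exact hinj e he1 f hf1 he2 hf2 hcef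
  have hTne : T.Nonempty := by
    refine ⟨s(⟨m, by omega⟩, ⟨m+1, by omega⟩), ?_⟩
    rw [hT, Finset.mem_filter, SimpleGraph.mem_edgeFinset, SimpleGraph.mem_edgeSet]
    constructor
    · simp only [SimpleGraph.top_adj, ne_eq, Fin.mk.injEq]
      omega
    · rintro ⟨v, hv, hvlt⟩
      rw [Sym2.mem_iff] at hv
      rcases hv with rfl | rfl <;> simp only [Fin.val_mk] at hvlt <;> omega
  have himgT : T.image c = {c0} := by
    apply Finset.eq_singleton_iff_unique_mem.mpr
    constructor
    · obtain ⟨e, he⟩ := hTne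
      exact Finset.mem_image.mpr ⟨e, he, hc0 e (hTmem e he) (hTall e he)⟩
    · intro x hx
      obtain ⟨e, he, rfl⟩ := Finset.mem_image.mp hx
      exact hc0 e (hTmem e he) (hTall e he)
  have hEsplit : E = S ∪ T := (Finset.filter_union_filter_not_eq P E).symm
  have himg : (E.image c).card = S.card + 1 := by
    rw [hEsplit, Finset.image_union, himgT, Finset.card_union_of_disjoint, himgS,
      Finset.card_singleton]
    rw [Finset.disjoint_singleton_right]
    intro hx
    obtain ⟨e, he, hce⟩ := Finset.mem_image.mp hx
    obtain ⟨he1, he2⟩ := hSsub e he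
    exact hne e he1 he2 hce
  have hset : c '' (⊤ : SimpleGraph (Fin n)).edgeSet = ↑(E.image c) := by
    rw [hcoe, Finset.coe_image]
  have hconc1 : (c '' (⊤ : SimpleGraph (Fin n)).edgeSet).ncard
      = m.choose 2 + m * r + 1 := by
    rw [hset, Set.ncard_coe_finset, himg, hScard]
  refine ⟨hconc1, ?_, ?_⟩
  · rw [hconc1, hcoe, Set.ncard_coe_finset, hEcard]
  -- no rainbow matching
  rintro ⟨M, hMcard, hMsub, hMdisj, hMinj⟩
  set M1 := M.filter P with hM1
  set M2 := M.filter (fun e => ¬ P e) with hM2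
  have hMsplit : M1.card + M2.card = M.card :=
    Finset.card_filter_add_card_filter_not _
  have hM1card : M1.card ≤ m := by
    have hcard : M1.card ≤ (Finset.Iio (⟨m, by omega⟩ : Fin n)).card := by
      apply Finset.card_le_card_of_injOn
        (f := fun e => if h : P e then h.choose else ⟨0, by omega⟩)
      · intro e he
        simp only [Finset.mem_coe, hM1, Finset.mem_filter] at he
        simp only [Finset.mem_coe]
        rw [dif_pos he.2]
        have hspec := he.2.choose_spec
        rw [Finset.mem_Iio]
        exact Fin.lt_def.mpr (by simpa using hspec.2)
      · intro e he f hf hef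
        rw [Finset.mem_coe, hM1, Finset.mem_filter] at he hf
        simp only [dif_pos he.2, dif_pos hf.2] at hef
        by_contra hne'
        have h1 := he.2.choose_spec
        have h2 := hf.2.choose_spec
        exact hMdisj e he.1 f hf.1 hne' _ h1.1 (hef ▸ h2.1)
    simpa using hcard
  have hM2card : M2.card ≤ 1 := by
    apply Finset.card_le_one.mpr
    intro a ha b hb
    rw [hM2, Finset.mem_filter] at ha hb
    have hca : c a = c0 := hc0 a (hMsub (Finset.mem_coe.mpr ha.1))
      (fun v hv => by by_contra h; exact ha.2 ⟨v, hv, by omega⟩)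
    have hcb : c b = c0 := hc0 b (hMsub (Finset.mem_coe.mpr hb.1))
      (fun v hv => by by_contra h; exact hb.2 ⟨v, hv, by omega⟩)
    exact hMinj (Finset.mem_coe.mpr ha.1) (Finset.mem_coe.mpr hb.1) (hca.trans hcb.symm)
  omega
end

section
/- Let k ≥ 2 and n ≥ 2k be integers. Let G be the complete graph on vertex set {1,…,n}, edge-colored so that each edge with both endpoints in {1,…,2k−3} receives its own distinct color, and all remaining edges receive one single common color different from all the others. Then c(G) = C(2k−3,2) + 1, so e(G) + c(G) = C(n,2) + C(2k−3,2) + 1, and G contains no rainbow matching of size k. -/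
/-!
The colours are the `C(2k-3, 2)` pairwise distinct colours of the edges inside
`S = {0, …, 2k-4}`, plus `c0`, which every edge leaving `S` carries. A rainbow matching uses
`c0` at most once, so all but one of its edges are vertex-disjoint edges inside `S`; hence
`2(k-1) ≤ |S| = 2k-3`, which is impossible.
-/

open Finset

lemma Set.ncard_image_eq_ncard_add_one {β α : Type*} {c : β → α} {c0 : α} {E A : Set β}
    (hA : A ⊆ E) (hAfin : A.Finite) (hinj : Set.InjOn c A) (hne : ∀ e ∈ A, c e ≠ c0)
    (hc0 : ∀ e ∈ E \ A, c e = c0) (hrest : (E \ A).Nonempty) :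
    (c '' E).ncard = A.ncard + 1 := by
  have himage : c '' E = insert c0 (c '' A) := by
    refine Set.Subset.antisymm ?_ (Set.insert_subset ?_ (Set.image_mono hA))
    · rintro _ ⟨e, he, rfl⟩
      by_cases heA : e ∈ A
      · exact Set.mem_insert_of_mem _ ⟨e, heA, rfl⟩
      · exact hc0 e ⟨he, heA⟩ ▸ Set.mem_insert _ _
    · obtain ⟨e, he⟩ := hrest
      exact ⟨e, he.1, hc0 e he⟩
  have hc0A : c0 ∉ c '' A := by
    rintro ⟨e, he, hce⟩
    exact hne e he hce
  rw [himage, Set.ncard_insert_of_notMem hc0A (hAfin.image c), hinj.ncard_image]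

lemma SimpleGraph.ncard_top_edges_subset {V : Type*} [DecidableEq V] (S : Finset V) :
    {e ∈ (⊤ : SimpleGraph V).edgeSet | ∀ v ∈ e, v ∈ S}.ncard = (#S).choose 2 := by
  have h : {e ∈ (⊤ : SimpleGraph V).edgeSet | ∀ v ∈ e, v ∈ S} =
      ↑(S.offDiag.image Sym2.mk.uncurry) := by
    ext e
    induction e using Sym2.ind with
    | _ a b => aesop
  rw [h, Set.ncard_coe_finset, Sym2.card_image_offDiag]

lemma two_mul_card_le_card_of_pairwiseDisjoint {V : Type*} [DecidableEq V]
    {M : Finset (Sym2 V)} {S : Finset V} (hdiag : ∀ e ∈ M, ¬e.IsDiag)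
    (hdisj : (M : Set (Sym2 V)).PairwiseDisjoint Sym2.toFinset) (hS : ∀ e ∈ M, ∀ v ∈ e, v ∈ S) :
    2 * #M ≤ #S := by
  have hcover : M.biUnion Sym2.toFinset ⊆ S := by
    intro v hv
    obtain ⟨e, he, hve⟩ := Finset.mem_biUnion.1 hv
    exact hS e he v (Sym2.mem_toFinset.1 hve)
  calc 2 * #M = ∑ e ∈ M, #e.toFinset := by
        rw [Finset.sum_congr rfl fun e he => Sym2.card_toFinset_of_not_isDiag e (hdiag e he),
          Finset.sum_const, smul_eq_mul, mul_comm]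
    _ = #(M.biUnion Sym2.toFinset) := (Finset.card_biUnion hdisj).symm
    _ ≤ #S := Finset.card_le_card hcover

lemma HasRainbowMatching.two_mul_pred_le_card {V α : Type*} [DecidableEq V]
    {G : SimpleGraph V} {c : Sym2 V → α} {k : ℕ} (S : Finset V) (c0 : α)
    (hc0 : ∀ e ∈ G.edgeSet, (∃ v ∈ e, v ∉ S) → c e = c0) (h : HasRainbowMatching G c k) :
    2 * (k - 1) ≤ #S := by
  classical
  obtain ⟨M, rfl, hMG, hdisj, hrainbow⟩ := h
  have hc0_le_one : #(M.filter fun e => c e = c0) ≤ 1 :=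
    Finset.card_le_one.2 fun e he f hf =>
      hrainbow (Finset.mem_filter.1 he).1 (Finset.mem_filter.1 hf).1
        ((Finset.mem_filter.1 he).2.trans (Finset.mem_filter.1 hf).2.symm)
  have hother : 2 * #(M.filter fun e => ¬c e = c0) ≤ #S := by
    refine two_mul_card_le_card_of_pairwiseDisjoint (fun e he => ?_) ?_ fun e he v hv => ?_
    · exact G.not_isDiag_of_mem_edgeSet (hMG (Finset.mem_filter.1 he).1)
    · intro e he f hf hef
      exact Finset.disjoint_left.2 fun v hve hvf =>
        hdisj e (Finset.mem_filter.1 he).1 f (Finset.mem_filter.1 hf).1 hef v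
          (Sym2.mem_toFinset.1 hve) (Sym2.mem_toFinset.1 hvf)
    · by_contra hvS
      exact (Finset.mem_filter.1 he).2 (hc0 e (hMG (Finset.mem_filter.1 he).1) ⟨v, hv, hvS⟩)
  have hsplit := M.card_filter_add_card_filter_not fun e => c e = c0
  omega

/-- Construction II: let `k ≥ 2`, `n ≥ 2k`, and color the complete graph on `Fin n` so that
every edge with both endpoints among the first `2k-3` vertices gets its own distinct color
(all different from a fixed color `c0`) and all remaining edges get the common color `c0`.
Then `c(G) = C(2k-3,2) + 1`, hence `e(G) + c(G) = C(n,2) + C(2k-3,2) + 1`, and there is no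
rainbow matching of size `k`. -/
theorem constructionII
    {α : Type*} (k n : ℕ) (hk : 2 ≤ k) (hn : 2 * k ≤ n)
    (c : Sym2 (Fin n) → α) (c0 : α)
    (hinj : ∀ e ∈ (⊤ : SimpleGraph (Fin n)).edgeSet, ∀ f ∈ (⊤ : SimpleGraph (Fin n)).edgeSet,
      (∀ v ∈ e, (v : ℕ) < 2 * k - 3) → (∀ v ∈ f, (v : ℕ) < 2 * k - 3) → c e = c f → e = f)
    (hne : ∀ e ∈ (⊤ : SimpleGraph (Fin n)).edgeSet,
      (∀ v ∈ e, (v : ℕ) < 2 * k - 3) → c e ≠ c0)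
    (hc0 : ∀ e ∈ (⊤ : SimpleGraph (Fin n)).edgeSet,
      (∃ v ∈ e, 2 * k - 3 ≤ (v : ℕ)) → c e = c0) :
    (c '' (⊤ : SimpleGraph (Fin n)).edgeSet).ncard = (2 * k - 3).choose 2 + 1 ∧
    (⊤ : SimpleGraph (Fin n)).edgeSet.ncard + (c '' (⊤ : SimpleGraph (Fin n)).edgeSet).ncard
        = n.choose 2 + ((2 * k - 3).choose 2 + 1) ∧
    ¬ HasRainbowMatching (⊤ : SimpleGraph (Fin n)) c k := by
  set S := Finset.Iio (⟨2 * k - 3, by omega⟩ : Fin n)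
  have hS : #S = 2 * k - 3 := Fin.card_Iio _
  have hmemS : ∀ v : Fin n, v ∈ S ↔ (v : ℕ) < 2 * k - 3 := fun v => by
    simp [S, Fin.lt_def]
  simp only [← hmemS] at hinj hne
  simp only [← not_lt, ← hmemS] at hc0
  set A := {e ∈ (⊤ : SimpleGraph (Fin n)).edgeSet | ∀ v ∈ e, v ∈ S}
  have hcolors : (c '' (⊤ : SimpleGraph (Fin n)).edgeSet).ncard = (2 * k - 3).choose 2 + 1 := by
    rw [Set.ncard_image_eq_ncard_add_one (A := A) (c0 := c0) (fun e he => he.1) (Set.toFinite A),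
      SimpleGraph.ncard_top_edges_subset, hS]
    · exact fun e he f hf => hinj e he.1 f hf.1 he.2 hf.2
    · exact fun e he => hne e he.1 he.2
    · rintro e ⟨he, heA⟩
      obtain ⟨v, hv, hvS⟩ := not_forall₂.1 fun h => heA ⟨he, h⟩
      exact hc0 e he ⟨v, hv, hvS⟩
    · refine ⟨s(⟨2 * k - 3, by omega⟩, ⟨2 * k - 2, by omega⟩), ?_, by simp [A, hmemS]⟩
      simp only [SimpleGraph.edgeSet_top, Set.mem_compl_iff, Sym2.mem_diagSet, Sym2.mk_isDiag_iff,
        Fin.mk.injEq]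
      omega
  refine ⟨hcolors, ?_, fun h => ?_⟩
  · rw [hcolors, ← SimpleGraph.coe_edgeFinset, Set.ncard_coe_finset,
      SimpleGraph.card_edgeFinset_top_eq_card_choose_two, Fintype.card_fin]
  have := h.two_mul_pred_le_card S c0 hc0
  omega
end

section
/- Let k ≥ 2 and n ≥ 2k be integers. Let G be the graph on vertex set {1,…,n} whose edges are exactly the pairs having at least one endpoint in {1,…,2k−2}, edge-colored so that each edge with both endpoints in {1,…,2k−2} receives its own distinct color, and all remaining edges receive one single common color different from all the others. Then e(G) = C(n,2) − C(n−2k+2,2) and c(G) = C(2k−2,2) + 1, so e(G) + c(G) = C(n,2) + C(2k−2,2) − C(n−2k+2,2) + 1, and G contains no rainbow matching of size k. -/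
lemma ncard_top_edgeSet (a : ℕ) : (⊤ : SimpleGraph (Fin a)).edgeSet.ncard = a.choose 2 := by
  rw [Set.ncard_eq_toFinset_card']
  have := SimpleGraph.card_edgeFinset_top_eq_card_choose_two (V := Fin a)
  simpa [SimpleGraph.edgeFinset] using this

lemma ncard_map_top {a n : ℕ} (f : Fin a → Fin n) (hf : Function.Injective f) :
    (Sym2.map f '' (⊤ : SimpleGraph (Fin a)).edgeSet).ncard = a.choose 2 := by
  rw [Set.ncard_image_of_injective _ (Sym2.map.injective hf), ncard_top_edgeSet]

/-- Construction III: let `k ≥ 2`, `n ≥ 2k`, and let `G` be the graph on `Fin n` whose edges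
are exactly the pairs meeting the first `2k-2` vertices, colored so that every edge with both
endpoints among the first `2k-2` vertices gets its own distinct color (all different from a
fixed color `c0`) and all remaining edges get the common color `c0`. Then
`e(G) = C(n,2) - C(n-2k+2,2)` and `c(G) = C(2k-2,2) + 1`, hence
`e(G) + c(G) = C(n,2) + C(2k-2,2) - C(n-2k+2,2) + 1`, and there is no rainbow matching of
size `k`. -/
theorem constructionIII
    {α : Type*} (k n : ℕ) (hk : 2 ≤ k) (hn : 2 * k ≤ n)
    (G : SimpleGraph (Fin n))
    (hG : ∀ u v : Fin n, G.Adj u v ↔ u ≠ v ∧ ((u : ℕ) < 2 * k - 2 ∨ (v : ℕ) < 2 * k - 2))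
    (c : Sym2 (Fin n) → α) (c0 : α)
    (hinj : ∀ e ∈ G.edgeSet, ∀ f ∈ G.edgeSet,
      (∀ v ∈ e, (v : ℕ) < 2 * k - 2) → (∀ v ∈ f, (v : ℕ) < 2 * k - 2) → c e = c f → e = f)
    (hne : ∀ e ∈ G.edgeSet, (∀ v ∈ e, (v : ℕ) < 2 * k - 2) → c e ≠ c0)
    (hc0 : ∀ e ∈ G.edgeSet, (∃ v ∈ e, 2 * k - 2 ≤ (v : ℕ)) → c e = c0) :
    G.edgeSet.ncard = n.choose 2 - (n - 2 * k + 2).choose 2 ∧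
    (c '' G.edgeSet).ncard = (2 * k - 2).choose 2 + 1 ∧
    (G.edgeSet.ncard : ℤ) + ((c '' G.edgeSet).ncard : ℤ)
        = (n.choose 2 : ℤ) + ((2 * k - 2).choose 2 : ℤ) - ((n - 2 * k + 2).choose 2 : ℤ) + 1 ∧
    ¬ HasRainbowMatching G c k := by
  classical
  set m := 2 * k - 2 with hm
  have hm2 : 2 ≤ m := by omega
  have hmn : m < n := by omega
  -- the set of "missing" edges (both endpoints big)
  set B : Set (Sym2 (Fin n)) := {e | ¬ e.IsDiag ∧ ∀ v ∈ e, m ≤ (v : ℕ)} with hB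
  -- the set of "small" edges
  set E : Set (Sym2 (Fin n)) := {e | ¬ e.IsDiag ∧ ∀ v ∈ e, (v : ℕ) < m} with hE
  have hEsub : E ⊆ G.edgeSet := by
    intro e he
    induction e with
    | _ u v =>
      obtain ⟨hd, hlt⟩ := he
      rw [SimpleGraph.mem_edgeSet, hG]
      refine ⟨fun h => hd (by simp [h]), Or.inl (hlt u (by simp))⟩
  -- count of B
  have hBcard : B.ncard = (n - m).choose 2 := by
    have hf : Function.Injective (fun i : Fin (n - m) => (⟨m + i, by omega⟩ : Fin n)) := by
      intro a b hab
      simpa [Fin.ext_iff] using hab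
    rw [show B = Sym2.map (fun i : Fin (n - m) => (⟨m + i, by omega⟩ : Fin n)) ''
        (⊤ : SimpleGraph (Fin (n - m))).edgeSet from ?_, ncard_map_top _ hf]
    apply Set.Subset.antisymm
    · intro e he
      induction e with
      | _ u v =>
        obtain ⟨hd, hge⟩ := he
        rw [Sym2.isDiag_iff_proj_eq] at hd
        have hu : m ≤ (u : ℕ) := hge u (by simp)
        have hv : m ≤ (v : ℕ) := hge v (by simp)
        refine ⟨s(⟨(u : ℕ) - m, by omega⟩, ⟨(v : ℕ) - m, by omega⟩), ?_, ?_⟩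
        · simp only [SimpleGraph.edgeSet_top, Set.mem_setOf_eq, Sym2.isDiag_iff_proj_eq]
          intro h
          rw [Sym2.mem_diagSet, Sym2.mk_isDiag_iff, Fin.mk.injEq] at h
          refine hd (Fin.ext ?_)
          show (u : ℕ) = (v : ℕ)
          omega
        · simp only [Sym2.map_pair_eq]
          rw [Sym2.eq_iff]
          exact Or.inl ⟨Fin.ext (by simp only [Fin.val_mk]; omega),
            Fin.ext (by simp only [Fin.val_mk]; omega)⟩
    · rintro e ⟨f, hf1, rfl⟩
      induction f with
      | _ a b =>
        simp only [SimpleGraph.edgeSet_top, Set.mem_setOf_eq,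
          Sym2.isDiag_iff_proj_eq] at hf1
        simp only [Sym2.map_pair_eq, hB, Set.mem_setOf_eq, Sym2.isDiag_iff_proj_eq]
        refine ⟨fun h => hf1 (hf h), fun w hw => ?_⟩
        rcases Sym2.mem_iff.mp hw with h | h <;> subst h <;> simp
  -- count of E
  have hEcard : E.ncard = m.choose 2 := by
    have hf : Function.Injective (Fin.castLE hmn.le) := Fin.castLE_injective _
    rw [show E = Sym2.map (Fin.castLE hmn.le) ''
        (⊤ : SimpleGraph (Fin m)).edgeSet from ?_, ncard_map_top _ hf]
    apply Set.Subset.antisymm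
    · intro e he
      induction e with
      | _ u v =>
        obtain ⟨hd, hlt⟩ := he
        rw [Sym2.isDiag_iff_proj_eq] at hd
        have hu : (u : ℕ) < m := hlt u (by simp)
        have hv : (v : ℕ) < m := hlt v (by simp)
        refine ⟨s(⟨(u : ℕ), hu⟩, ⟨(v : ℕ), hv⟩), ?_, ?_⟩
        · simp only [SimpleGraph.edgeSet_top, Set.mem_setOf_eq, Sym2.isDiag_iff_proj_eq]
          intro h
          exact hd (Fin.ext (by simpa [Fin.ext_iff] using h))
        · simp only [Sym2.map_pair_eq]
          rw [Sym2.eq_iff]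
          exact Or.inl ⟨Fin.ext rfl, Fin.ext rfl⟩
    · rintro e ⟨f, hf1, rfl⟩
      induction f with
      | _ a b =>
        simp only [SimpleGraph.edgeSet_top, Set.mem_setOf_eq,
          Sym2.isDiag_iff_proj_eq] at hf1
        simp only [Sym2.map_pair_eq, hE, Set.mem_setOf_eq, Sym2.isDiag_iff_proj_eq]
        refine ⟨fun h => hf1 (hf h), fun w hw => ?_⟩
        rcases Sym2.mem_iff.mp hw with h | h <;> subst h <;>
          simp [Fin.castLE, Fin.is_lt]
  -- partition of top edges
  have hpart : G.edgeSet ∪ B = (⊤ : SimpleGraph (Fin n)).edgeSet := by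
    ext e
    induction e with
    | _ u v =>
      simp only [Set.mem_union, SimpleGraph.mem_edgeSet, hG, SimpleGraph.top_adj, hB,
        Set.mem_setOf_eq, Sym2.isDiag_iff_proj_eq]
      constructor
      · rintro (⟨h1, _⟩ | ⟨h1, _⟩)
        · exact h1
        · exact fun h => h1 (by simp [h])
      · intro h
        by_cases hu : (u : ℕ) < m
        · exact Or.inl ⟨h, Or.inl hu⟩
        · by_cases hv : (v : ℕ) < m
          · exact Or.inl ⟨h, Or.inr hv⟩
          · refine Or.inr ⟨fun hh => h (by simpa using hh), ?_⟩
            intro w hw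
            rcases Sym2.mem_iff.mp hw with hh | hh <;> subst hh <;> omega
  have hdisj : Disjoint G.edgeSet B := by
    rw [Set.disjoint_left]
    intro e he heB
    induction e with
    | _ u v =>
      rw [SimpleGraph.mem_edgeSet, hG] at he
      rcases he.2 with h | h
      · exact absurd (heB.2 u (by simp)) (by omega)
      · exact absurd (heB.2 v (by simp)) (by omega)
  have hEdge : G.edgeSet.ncard = n.choose 2 - (n - 2 * k + 2).choose 2 := by
    have h1 : G.edgeSet.ncard + B.ncard = n.choose 2 := by
      rw [← Set.ncard_union_eq hdisj (Set.toFinite _) (Set.toFinite _), hpart,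
        ncard_top_edgeSet]
    rw [hBcard, show n - m = n - 2 * k + 2 from by omega] at h1
    omega
  -- the special edge with color c0
  have hc0mem : c0 ∈ c '' G.edgeSet := by
    have hadj : G.Adj ⟨0, by omega⟩ ⟨n - 1, by omega⟩ := by
      rw [hG]
      exact ⟨by simp [Fin.ext_iff]; omega, Or.inl (by simp; omega)⟩
    refine ⟨s(⟨0, by omega⟩, ⟨n - 1, by omega⟩), hadj, ?_⟩
    refine hc0 _ hadj ⟨⟨n - 1, by omega⟩, by simp, by simp; omega⟩
  -- image decomposition
  have himg : c '' G.edgeSet = insert c0 (c '' E) := by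
    ext x
    simp only [Set.mem_insert_iff, Set.mem_image]
    constructor
    · rintro ⟨e, he, rfl⟩
      by_cases hsm : ∀ v ∈ e, (v : ℕ) < m
      · exact Or.inr ⟨e, ⟨SimpleGraph.not_isDiag_of_mem_edgeSet _ he, hsm⟩, rfl⟩
      · push_neg at hsm
        obtain ⟨v, hv1, hv2⟩ := hsm
        exact Or.inl (hc0 e he ⟨v, hv1, hv2⟩)
    · rintro (rfl | ⟨e, he, rfl⟩)
      · exact hc0mem
      · exact ⟨e, hEsub he, rfl⟩
  have hColor : (c '' G.edgeSet).ncard = m.choose 2 + 1 := by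
    rw [himg]
    have hnotmem : c0 ∉ c '' E := by
      rintro ⟨e, he, hce⟩
      exact hne e (hEsub he) he.2 hce
    rw [Set.ncard_insert_of_notMem hnotmem (Set.toFinite _)]
    have : Set.InjOn c E := by
      intro e he f hf hcef
      exact hinj e (hEsub he) f (hEsub hf) he.2 hf.2 hcef
    rw [Set.ncard_image_of_injOn this, hEcard]
  refine ⟨hEdge, hColor, ?_, ?_⟩
  · have hle : (n - 2 * k + 2).choose 2 ≤ n.choose 2 :=
      Nat.choose_le_choose 2 (by omega)
    rw [hEdge, hColor]
    push_cast [hle]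
    ring
  -- no rainbow matching
  · rintro ⟨M, hMcard, hMsub, hMdisj, hMinj⟩
    set S : Finset (Sym2 (Fin n)) := M.filter (fun e => ∀ v ∈ e, (v : ℕ) < m) with hS
    have hSsubM : S ⊆ M := Finset.filter_subset _ _
    -- M \ S has at most one element
    have hMS1 : (M \ S).card ≤ 1 := by
      rw [Finset.card_le_one]
      intro e he f hf
      simp only [Finset.mem_sdiff, hS, Finset.mem_filter, not_and] at he hf
      have hec : c e = c0 := by
        apply hc0 e (hMsub he.1)
        have := he.2 he.1
        push_neg at this
        obtain ⟨v, hv1, hv2⟩ := this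
        exact ⟨v, hv1, hv2⟩
      have hfc : c f = c0 := by
        apply hc0 f (hMsub hf.1)
        have := hf.2 hf.1
        push_neg at this
        obtain ⟨v, hv1, hv2⟩ := this
        exact ⟨v, hv1, hv2⟩
      exact hMinj he.1 hf.1 (hec.trans hfc.symm)
    have hScard : k - 1 ≤ S.card := by
      have := Finset.card_sdiff_add_card_eq_card hSsubM
      omega
    -- the covered small vertices
    set T : Finset (Fin n) := S.biUnion (fun e => Finset.univ.filter (· ∈ e)) with hT
    have hTcard : T.card = 2 * S.card := by
      rw [Finset.card_biUnion]
      · rw [Finset.sum_congr rfl (fun e he => ?_), Finset.sum_const, smul_eq_mul, mul_comm]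
        have hed : ¬ e.IsDiag :=
          SimpleGraph.not_isDiag_of_mem_edgeSet _ (hMsub (hSsubM he))
        induction e with
        | _ u v =>
          rw [Sym2.isDiag_iff_proj_eq] at hed
          rw [show Finset.univ.filter (· ∈ s(u, v)) = {u, v} from ?_]
          · rw [Finset.card_insert_of_notMem (by simp [hed]), Finset.card_singleton]
          · ext w; simp [Sym2.mem_iff]
      · intro e he f hf hef
        rw [Function.onFun, Finset.disjoint_left]
        intro v hv hv'
        simp only [Finset.mem_filter] at hv hv'
        exact hMdisj e (hSsubM he) f (hSsubM hf) hef v hv.2 hv'.2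
    have hTsub : T ⊆ Finset.univ.filter (fun v : Fin n => (v : ℕ) < m) := by
      intro v hv
      simp only [hT, Finset.mem_biUnion, Finset.mem_filter] at hv
      obtain ⟨e, he, _, hv2⟩ := hv
      have := (Finset.mem_filter.mp he).2
      simp only [Finset.mem_filter, Finset.mem_univ, true_and]
      exact this v hv2
    have hsmallcard : (Finset.univ.filter (fun v : Fin n => (v : ℕ) < m)).card = m := by
      have h := Finset.card_nbij (s := Finset.univ.filter (fun v : Fin n => (v : ℕ) < m))
        (t := Finset.range m) (fun v => (v : ℕ)) ?_ ?_ ?_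
      · rw [h, Finset.card_range]
      · intro v hv
        rw [Finset.mem_coe, Finset.mem_filter] at hv
        simp [hv.2]
      · intro a _ b _ hab
        exact Fin.ext hab
      · intro j hj
        simp only [Finset.coe_range, Set.mem_Iio] at hj
        exact ⟨⟨j, by omega⟩, by simp [hj], rfl⟩
    have hSle : S.card ≤ k - 1 := by
      have := Finset.card_le_card hTsub
      rw [hTcard, hsmallcard] at this
      omega
    have hSeq : S.card = k - 1 := le_antisymm hSle hScard
    -- T covers all small vertices
    have hTeq : T = Finset.univ.filter (fun v : Fin n => (v : ℕ) < m) := by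
      apply Finset.eq_of_subset_of_card_le hTsub
      rw [hTcard, hSeq, hsmallcard]
      omega
    -- the leftover edge
    have hMSne : (M \ S).Nonempty := by
      rw [← Finset.card_pos]
      have := Finset.card_sdiff_add_card_eq_card hSsubM
      omega
    obtain ⟨e0, he0⟩ := hMSne
    rw [Finset.mem_sdiff] at he0
    have he0G : e0 ∈ G.edgeSet := hMsub he0.1
    -- e0 has a small endpoint
    have : ∃ v ∈ e0, (v : ℕ) < m := by
      induction e0 with
      | _ u v =>
        rw [SimpleGraph.mem_edgeSet, hG] at he0G
        rcases he0G.2 with h | h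
        · exact ⟨u, by simp, h⟩
        · exact ⟨v, by simp, h⟩
    obtain ⟨v, hv1, hv2⟩ := this
    have hvT : v ∈ T := by
      rw [hTeq]
      simp [hv2]
    simp only [hT, Finset.mem_biUnion, Finset.mem_filter] at hvT
    obtain ⟨f, hf, _, hvf⟩ := hvT
    have hfe0 : f ≠ e0 := by
      intro h
      subst h
      exact he0.2 hf
    exact hMdisj f (hSsubM hf) e0 he0.1 hfe0 v hvf hv1
end

section
/- For all integers k ≥ 2 and n ≥ 2k, there exists an edge-colored graph G on n vertices with e(G) + c(G) = C(n,2) + 1 + max{ C(2k−2,2) − C(n−2k+2,2), C(k−2,2) + (k−2)(n−k+2), C(2k−3,2) } (where the subtraction is taken in the integers) that contains no rainbow matching of size k. In particular, the threshold C(n,2) + 2 + max{ C(2k−2,2) − C(n−2k+2,2), C(k−2,2) + (k−2)(n−k+2), C(2k−3,2) } on e(G)+c(G) for forcing a rainbow matching of size k is best possible. -/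
open Finset Function

lemma Nat.add_choose_two (a b : ℕ) :
    (a + b).choose 2 = a.choose 2 + a * b + b.choose 2 := by
  rw [Nat.add_choose_eq, Finset.Nat.sum_antidiagonal_eq_sum_range_succ_mk]
  simp only [sum_range_succ, sum_range_zero, Nat.sub_zero, Nat.reduceSub,
    Nat.choose_zero_right, Nat.choose_one_right]
  ring

namespace RainbowMatching

def ExistsRainbowMatchingFree (V : Type*) (k : ℕ) (s : ℤ) : Prop :=
  ∃ (G : SimpleGraph V) (c : Sym2 V → ℕ),
    (G.edgeSet.ncard : ℤ) + ((c '' G.edgeSet).ncard : ℤ) = s ∧ ¬ HasRainbowMatching G c k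

lemma ExistsRainbowMatchingFree.add_max {V : Type*} {k : ℕ} {s x y : ℤ}
    (hx : ExistsRainbowMatchingFree V k (s + x)) (hy : ExistsRainbowMatchingFree V k (s + y)) :
    ExistsRainbowMatchingFree V k (s + max x y) := by
  rcases max_choice x y with h | h <;> rwa [h]

variable {V : Type*} [DecidableEq V]

section Edges

def edgesWithin (T : Finset V) : Finset (Sym2 V) := {z ∈ T.sym2 | ¬ z.IsDiag}

lemma edgesWithin_mono {S T : Finset V} (h : S ⊆ T) : edgesWithin S ⊆ edgesWithin T :=
  filter_subset_filter _ (sym2_mono h)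

lemma mem_edgesWithin {T : Finset V} {z : Sym2 V} :
    z ∈ edgesWithin T ↔ ¬ z.IsDiag ∧ ∀ v ∈ z, v ∈ T := by
  rw [edgesWithin, mem_filter, mem_sym2_iff, and_comm]

lemma card_edgesWithin (T : Finset V) : #(edgesWithin T) = (#T).choose 2 := by
  rw [edgesWithin, sym2_eq_image, Sym2.filter_image_mk_not_isDiag, Sym2.card_image_offDiag]

lemma card_filter_mem_eq_two {T : Finset V} {z : Sym2 V} (hz : z ∈ edgesWithin T) :
    #{v ∈ T | v ∈ z} = 2 := by
  rw [mem_edgesWithin] at hz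
  rw [← Sym2.card_toFinset_of_not_isDiag z hz.1]
  congr 1
  ext v
  simp only [mem_filter, Sym2.mem_toFinset, and_iff_right_iff_imp]
  exact hz.2 v

variable [Fintype V]

def edgesMeeting (S : Finset V) : Finset (Sym2 V) := edgesWithin univ \ edgesWithin Sᶜ

lemma mem_edgesMeeting {S : Finset V} {z : Sym2 V} :
    z ∈ edgesMeeting S ↔ ¬ z.IsDiag ∧ ∃ v ∈ z, v ∈ S := by
  simp only [edgesMeeting, mem_sdiff, mem_edgesWithin, mem_univ, mem_compl]
  aesop

lemma card_edgesMeeting (S : Finset V) :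
    #(edgesMeeting S) = (Fintype.card V).choose 2 - (Fintype.card V - #S).choose 2 := by
  rw [edgesMeeting, card_sdiff_of_subset (edgesWithin_mono (subset_univ _)),
    card_edgesWithin, card_edgesWithin, card_univ, card_compl]

lemma edgesWithin_subset_edgesMeeting (T : Finset V) : edgesWithin T ⊆ edgesMeeting T :=
  fun z hz => mem_edgesMeeting.2 ⟨(mem_edgesWithin.1 hz).1, _, Sym2.out_fst_mem z,
    (mem_edgesWithin.1 hz).2 _ (Sym2.out_fst_mem z)⟩

lemma one_le_card_filter_mem {S : Finset V} {z : Sym2 V} (hz : z ∈ edgesMeeting S) :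
    1 ≤ #{v ∈ S | v ∈ z} := by
  obtain ⟨-, v, hvz, hvS⟩ := mem_edgesMeeting.1 hz
  exact card_pos.2 ⟨v, mem_filter.2 ⟨hvS, hvz⟩⟩

lemma edgeSet_top_eq_edgesWithin_univ :
    (⊤ : SimpleGraph V).edgeSet = ↑(edgesWithin (univ : Finset V)) := by
  ext z
  simp [mem_edgesWithin]

lemma edgeSet_fromRel_mem (S : Finset V) :
    (SimpleGraph.fromRel fun v _ => v ∈ S).edgeSet = ↑(edgesMeeting S) := by
  ext z
  induction z using Sym2.ind with
  | _ x y => simp [mem_edgesMeeting]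

end Edges

section Colouring

def rainbowOn (P : Finset (Sym2 V)) (f : Sym2 V → ℕ) (z : Sym2 V) : ℕ :=
  if z ∈ P then f z + 1 else 0

variable {P : Finset (Sym2 V)} {f : Sym2 V → ℕ}

lemma ncard_image_rainbowOn {E : Set (Sym2 V)} (hf : Injective f) (hPE : ↑P ⊆ E)
    (hEP : ¬ E ⊆ ↑P) : (rainbowOn P f '' E).ncard = #P + 1 := by
  have himage : rainbowOn P f '' E = insert 0 ((f · + 1) '' ↑P) := by
    ext c
    constructor
    · rintro ⟨z, -, rfl⟩
      by_cases hz : z ∈ P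
      · exact Or.inr ⟨z, hz, (if_pos hz).symm⟩
      · exact Or.inl (if_neg hz)
    · rintro (rfl | ⟨z, hz, rfl⟩)
      · obtain ⟨z, hzE, hzP⟩ := Set.not_subset.1 hEP
        exact ⟨z, hzE, if_neg hzP⟩
      · exact ⟨z, hPE hz, if_pos hz⟩
  rw [himage, Set.ncard_insert_of_notMem (by simp) (Set.toFinite _),
    Set.ncard_image_of_injective _ fun _ _ h => hf (Nat.succ_injective h), Set.ncard_coe_finset]

lemma card_filter_notMem_le_one {M : Finset (Sym2 V)} (hM : Set.InjOn (rainbowOn P f) ↑M) :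
    #{z ∈ M | z ∉ P} ≤ 1 :=
  card_le_one.2 fun y hy z hz => by
    rw [mem_filter] at hy hz
    exact hM hy.1 hz.1 (by rw [rainbowOn, if_neg hy.2, rainbowOn, if_neg hz.2])

end Colouring

lemma sum_card_filter_mem_le {M : Finset (Sym2 V)}
    (hM : ∀ e ∈ M, ∀ f ∈ M, e ≠ f → ∀ v : V, v ∈ e → v ∉ f) (T : Finset V) :
    ∑ z ∈ M, #{v ∈ T | v ∈ z} ≤ #T := by
  rw [← card_biUnion fun e he f hf hef =>
    disjoint_filter.2 fun v _ hve => hM e he f hf hef v hve]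
  exact card_le_card (biUnion_subset.2 fun _ _ => filter_subset _ _)

-- `a (k - 1) + b ≤ #T`, stated without truncated subtraction.
lemma mul_add_le_of_hasRainbowMatching {G : SimpleGraph V} {P : Finset (Sym2 V)}
    {f : Sym2 V → ℕ} {T : Finset V} {a b k : ℕ} (hba : b ≤ a)
    (ha : ∀ z ∈ P, a ≤ #{v ∈ T | v ∈ z}) (hb : ∀ z ∈ G.edgeSet, b ≤ #{v ∈ T | v ∈ z})
    (h : HasRainbowMatching G (rainbowOn P f) k) : a * k + b ≤ #T + a := by
  obtain ⟨M, rfl, hMG, hdisj, hinj⟩ := h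
  have hout := card_filter_notMem_le_one hinj
  have hsplit := card_filter_add_card_filter_not (s := M) (p := (· ∈ P))
  have hsum : a * #{z ∈ M | z ∈ P} + b * #{z ∈ M | z ∉ P} ≤ #T := calc
    _ = ∑ z ∈ M with z ∈ P, a + ∑ z ∈ M with z ∉ P, b := by simp [mul_comm]
    _ ≤ ∑ z ∈ M with z ∈ P, #{v ∈ T | v ∈ z} + ∑ z ∈ M with z ∉ P, #{v ∈ T | v ∈ z} :=
      add_le_add (sum_le_sum fun z hz => ha z (mem_filter.1 hz).2)
        (sum_le_sum fun z hz => hb z (hMG (mem_filter.1 hz).1))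
    _ = ∑ z ∈ M, #{v ∈ T | v ∈ z} := sum_filter_add_sum_filter_not _ _ _
    _ ≤ #T := sum_card_filter_mem_le hdisj T
  rcases Nat.le_one_iff_eq_zero_or_eq_one.1 hout with h | h <;> rw [h] at hsum hsplit <;>
    rw [← hsplit] <;> nlinarith

lemma existsRainbowMatchingFree_of_rainbowOn [Finite V] (G : SimpleGraph V)
    (P : Finset (Sym2 V)) (T : Finset V) {a b k : ℕ} (hPG : ↑P ⊆ G.edgeSet)
    (hlt : #P < G.edgeSet.ncard) (hba : b ≤ a) (ha : ∀ z ∈ P, a ≤ #{v ∈ T | v ∈ z})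
    (hb : ∀ z ∈ G.edgeSet, b ≤ #{v ∈ T | v ∈ z}) (hT : #T + a < a * k + b) :
    ExistsRainbowMatchingFree V k (G.edgeSet.ncard + #P + 1) := by
  obtain ⟨f, hf⟩ := exists_injective_nat (Sym2 V)
  have hGP : ¬ G.edgeSet ⊆ ↑P := fun h =>
    (Set.ncard_le_ncard h).not_gt (by rwa [Set.ncard_coe_finset])
  refine ⟨G, rainbowOn P f, ?_, fun h => hT.not_ge (mul_add_le_of_hasRainbowMatching hba ha hb h)⟩
  rw [ncard_image_rainbowOn hf hPG hGP]
  push_cast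
  ring

variable [Fintype V] {k n : ℕ}

lemma ncard_edgeSet_top : (⊤ : SimpleGraph V).edgeSet.ncard = (Fintype.card V).choose 2 := by
  rw [edgeSet_top_eq_edgesWithin_univ, Set.ncard_coe_finset, card_edgesWithin, card_univ]

lemma existsRainbowMatchingFree_fromRel (hk : 2 ≤ k) (hn : 2 * k ≤ n)
    (hV : Fintype.card V = n) :
    ExistsRainbowMatchingFree V k
      ((n.choose 2 : ℤ) + 1 + ((2 * k - 2).choose 2 - (n - 2 * k + 2).choose 2)) := by
  obtain ⟨T, -, hT⟩ := exists_subset_card_eq (s := (univ : Finset V)) (n := 2 * k - 2)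
    (by rw [card_univ]; omega)
  have hsplit := Nat.add_choose_two (2 * k - 2) (n - 2 * k + 2)
  rw [show 2 * k - 2 + (n - 2 * k + 2) = n by omega] at hsplit
  have hE := edgeSet_fromRel_mem T
  have hcard : (SimpleGraph.fromRel fun v _ => v ∈ T).edgeSet.ncard =
      (2 * k - 2).choose 2 + (2 * k - 2) * (n - 2 * k + 2) := by
    rw [hE, Set.ncard_coe_finset, card_edgesMeeting, hV, hT,
      show n - (2 * k - 2) = n - 2 * k + 2 by omega]
    omega
  have hpos : 0 < (2 * k - 2) * (n - 2 * k + 2) := Nat.mul_pos (by omega) (by omega)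
  convert existsRainbowMatchingFree_of_rainbowOn _ (edgesWithin T) T (a := 2) (b := 1) (k := k)
    (hE ▸ coe_subset.2 (edgesWithin_subset_edgesMeeting T))
    (by rw [hcard, card_edgesWithin, hT]; omega) (by norm_num)
    (fun z hz => (card_filter_mem_eq_two hz).ge)
    (fun z hz => one_le_card_filter_mem (mem_coe.1 (hE ▸ hz)))
    (by omega) using 1
  rw [hcard, card_edgesWithin, hT]
  push_cast
  linarith

lemma existsRainbowMatchingFree_top_edgesMeeting (hk : 2 ≤ k) (hn : 2 * k ≤ n)
    (hV : Fintype.card V = n) :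
    ExistsRainbowMatchingFree V k
      ((n.choose 2 : ℤ) + 1 + ((k - 2).choose 2 + (k - 2) * (n - k + 2) : ℕ)) := by
  obtain ⟨S, -, hS⟩ := exists_subset_card_eq (s := (univ : Finset V)) (n := k - 2)
    (by rw [card_univ]; omega)
  have hsplit := Nat.add_choose_two (k - 2) (n - k + 2)
  rw [show k - 2 + (n - k + 2) = n by omega] at hsplit
  have hcard : #(edgesMeeting S) = (k - 2).choose 2 + (k - 2) * (n - k + 2) := by
    rw [card_edgesMeeting, hV, hS, show n - (k - 2) = n - k + 2 by omega]
    omega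
  have hpos : 0 < (n - k + 2).choose 2 := Nat.choose_pos (by omega)
  convert existsRainbowMatchingFree_of_rainbowOn ⊤ (edgesMeeting S) S (a := 1) (b := 0) (k := k)
    (edgeSet_top_eq_edgesWithin_univ (V := V) ▸ coe_subset.2 sdiff_subset)
    (by rw [ncard_edgeSet_top (V := V), hcard, hV]; omega) zero_le_one
    (fun z hz => one_le_card_filter_mem hz) (fun _ _ => Nat.zero_le _) (by omega) using 1
  rw [ncard_edgeSet_top (V := V), hcard, hV]
  push_cast
  ring

lemma existsRainbowMatchingFree_top_edgesWithin (hk : 2 ≤ k) (hn : 2 * k ≤ n)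
    (hV : Fintype.card V = n) :
    ExistsRainbowMatchingFree V k ((n.choose 2 : ℤ) + 1 + ((2 * k - 3).choose 2 : ℕ)) := by
  obtain ⟨T, -, hT⟩ := exists_subset_card_eq (s := (univ : Finset V)) (n := 2 * k - 3)
    (by rw [card_univ]; omega)
  have hsplit := Nat.add_choose_two (2 * k - 3) (n - 2 * k + 3)
  rw [show 2 * k - 3 + (n - 2 * k + 3) = n by omega] at hsplit
  have hpos : 0 < (2 * k - 3) * (n - 2 * k + 3) := Nat.mul_pos (by omega) (by omega)
  convert existsRainbowMatchingFree_of_rainbowOn ⊤ (edgesWithin T) T (a := 2) (b := 0) (k := k)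
    (edgeSet_top_eq_edgesWithin_univ (V := V) ▸ coe_subset.2 (edgesWithin_mono (subset_univ T)))
    (by rw [ncard_edgeSet_top (V := V), card_edgesWithin, hT, hV]; omega) zero_le_two
    (fun z hz => (card_filter_mem_eq_two hz).ge) (fun _ _ => Nat.zero_le _) (by omega) using 1
  rw [ncard_edgeSet_top (V := V), card_edgesWithin, hT, hV]
  ring

end RainbowMatching

open RainbowMatching in
/-- Sharpness: for all `k ≥ 2` and `n ≥ 2k` there is an edge-colored graph `G` on `n`
vertices with `e(G) + c(G) = C(n,2) + 1 + max{C(2k-2,2) - C(n-2k+2,2),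
C(k-2,2) + (k-2)(n-k+2), C(2k-3,2)}` (subtraction in `ℤ`) and no rainbow matching of size
`k`; hence the threshold `C(n,2) + 2 + max{...}` is best possible. -/
theorem threshold_sharp (k n : ℕ) (hk : 2 ≤ k) (hn : 2 * k ≤ n) :
    ∃ (G : SimpleGraph (Fin n)) (c : Sym2 (Fin n) → ℕ),
      (G.edgeSet.ncard : ℤ) + ((c '' G.edgeSet).ncard : ℤ) =
        (n.choose 2 : ℤ) + 1 +
          max (((2 * k - 2).choose 2 : ℤ) - ((n - 2 * k + 2).choose 2 : ℤ))
            (max ((((k - 2).choose 2 + (k - 2) * (n - k + 2) : ℕ)) : ℤ)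
              (((2 * k - 3).choose 2 : ℕ) : ℤ)) ∧
      ¬ HasRainbowMatching G c k := by
  have hV := Fintype.card_fin n
  exact (existsRainbowMatchingFree_fromRel hk hn hV).add_max
    ((existsRainbowMatchingFree_top_edgesMeeting hk hn hV).add_max
      (existsRainbowMatchingFree_top_edgesWithin hk hn hV))
end

section
/- Let k ≥ 6 be an integer and let F be a simple graph on 2k vertices. Suppose S ⊆ V(F) is a set of vertices such that every connected component of F − S is factor-critical, and such that |S| + Σ_{i=1}^{q} (d_i − 1)/2 = k − 1, where d_1 ≥ d_2 ≥ … ≥ d_q are the orders of the connected components of F − S. If e(F) ≥ C(2k−2,2) + 1, then |S| ≤ 1 and at most one connected component of F − S has more than one vertex (i.e., d_2 = 1). -/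
/-! Factor-critical components have odd order, so the two counting hypotheses force `F - S` to
have exactly `q = |S| + 2` components, of orders `dᵢ` summing to `m = 2k - |S|`. No edge of `F`
joins two different components, so the `X = Σ dᵢ (m - dᵢ)` ordered pairs of vertices in different
components are non-edges, and `e(F) ≥ C(2k-2,2) + 1` leaves room for at most `X ≤ 8k - 8`.
Concavity of `d ↦ d (m - d)` on `[1, m - q + 1]` gives `dᵢ (m - dᵢ) ≥ (m - 1) + (q - 2)(dᵢ - 1)`,
which makes `X` too large once `|S| ≥ 2`; and two components of order at least `3` alone
contribute `6 (m - 3)` to `X`. -/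

/-- A graph `D` is factor-critical if for every vertex `v`, the graph `D - v` has a perfect
matching, i.e. `D` has a matching covering exactly the complement of `{v}`. -/
def FactorCritical {W : Type*} (D : SimpleGraph W) : Prop :=
  ∀ v : W, ∃ M : D.Subgraph, M.IsMatching ∧ M.verts = {v}ᶜ

open Finset SimpleGraph

theorem FactorCritical.odd_card {W : Type*} [Finite W] [Nonempty W] {D : SimpleGraph W}
    (h : FactorCritical D) : Odd (Nat.card W) := by
  classical
  have := Fintype.ofFinite W
  obtain ⟨v⟩ := ‹Nonempty W›
  obtain ⟨M, hM, hverts⟩ := h v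
  have heven : Even ({v}ᶜ : Set W).ncard := by
    rw [← hverts, Set.ncard_eq_toFinset_card']
    convert hM.even_card
  rw [← Set.ncard_add_ncard_compl {v}, Set.ncard_singleton, add_comm]
  exact heven.add_one

theorem FactorCritical.odd_ncard_supp {W : Type*} [Finite W] {G : SimpleGraph W}
    {c : G.ConnectedComponent} (h : FactorCritical (G.induce c.supp)) : Odd c.supp.ncard := by
  have : Nonempty c.supp := c.nonempty_supp.to_subtype
  simpa [Nat.card_coe_set_eq] using h.odd_card

section Fibres

variable {W ι : Type*} [Fintype W]

theorem ncard_preimage_singleton_eq_card_filter [DecidableEq ι] (f : W → ι) (i : ι) :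
    (f ⁻¹' {i}).ncard = #{w | f w = i} := by
  rw [← Set.ncard_coe_finset]
  congr 1
  ext
  simp

theorem sum_ncard_preimage_singleton [Fintype ι] (f : W → ι) :
    ∑ i, (f ⁻¹' {i}).ncard = Fintype.card W := by
  classical
  simp_rw [ncard_preimage_singleton_eq_card_filter]
  exact (card_eq_sum_card_fiberwise fun w _ => mem_univ (f w)).symm

theorem degree_comap_top [DecidableEq ι] (f : W → ι)
    [DecidableRel ((⊤ : SimpleGraph ι).comap f).Adj] (v : W) :
    ((⊤ : SimpleGraph ι).comap f).degree v = Fintype.card W - #{w | f w = f v} := by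
  have hsplit := card_filter_add_card_filter_not (s := univ) (p := fun w => f w = f v)
  have hnbr : ((⊤ : SimpleGraph ι).comap f).neighborFinset v =
      ({w | ¬ f w = f v} : Finset W) := by
    ext
    simp [eq_comm]
  rw [← card_neighborFinset_eq_degree, hnbr, ← card_univ]
  omega

theorem two_mul_ncard_edgeSet_comap_top [Fintype ι] (f : W → ι) :
    2 * ((⊤ : SimpleGraph ι).comap f).edgeSet.ncard =
      ∑ i, (f ⁻¹' {i}).ncard * (Fintype.card W - (f ⁻¹' {i}).ncard) := by
  classical
  rw [← coe_edgeFinset, Set.ncard_coe_finset, ← sum_degrees_eq_twice_card_edges]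
  simp_rw [degree_comap_top, ncard_preimage_singleton_eq_card_filter,
    ← sum_fiberwise' univ f fun i => Fintype.card W - #{w | f w = i}, sum_const, smul_eq_mul]

end Fibres

theorem ncard_edgeSet_add_ncard_edgeSet_comap_top_le {V ι : Type*} [Fintype V]
    (F : SimpleGraph V) {A : Set V} (f : A → ι) (hf : ∀ u v : A, F.Adj u v → f u = f v) :
    F.edgeSet.ncard + ((⊤ : SimpleGraph ι).comap f).edgeSet.ncard ≤
      (Fintype.card V).choose 2 := by
  classical
  set H := ((⊤ : SimpleGraph ι).comap f).map (Function.Embedding.subtype (· ∈ A))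
  have hdisj : Disjoint F H := by
    rw [disjoint_iff_inf_le]
    rintro _ _ ⟨hF, -, u, v, huv, rfl, rfl⟩
    exact huv (hf u v hF)
  have hH : H.edgeSet.ncard = ((⊤ : SimpleGraph ι).comap f).edgeSet.ncard := by
    rw [edgeSet_map, Set.ncard_image_of_injective _ (Function.Embedding.sym2Map _).injective]
  rw [← hH, ← Set.ncard_union_eq (disjoint_edgeSet.2 hdisj), ← edgeSet_sup, ← coe_edgeFinset,
    Set.ncard_coe_finset]
  exact card_edgeFinset_le_card_choose_two

theorem SimpleGraph.sum_ncard_supp {W : Type*} [Fintype W] (G : SimpleGraph W)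
    [Fintype G.ConnectedComponent] : ∑ c : G.ConnectedComponent, c.supp.ncard = Nat.card W :=
  (sum_ncard_preimage_singleton G.connectedComponentMk).trans Nat.card_eq_fintype_card.symm

theorem two_mul_ncard_edgeSet_add_sum_le {V : Type*} [Fintype V] (F : SimpleGraph V) (S : Set V)
    [Fintype (F.induce Sᶜ).ConnectedComponent] :
    2 * F.edgeSet.ncard + ∑ c : (F.induce Sᶜ).ConnectedComponent,
      c.supp.ncard * (Sᶜ.ncard - c.supp.ncard) ≤ 2 * (Fintype.card V).choose 2 := by
  classical
  have hedges := ncard_edgeSet_add_ncard_edgeSet_comap_top_le F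
    (F.induce Sᶜ).connectedComponentMk fun u v huv =>
      ConnectedComponent.sound (show (F.induce Sᶜ).Adj u v from huv).reachable
  have hcount := two_mul_ncard_edgeSet_comap_top (F.induce Sᶜ).connectedComponentMk
  rw [← Nat.card_eq_fintype_card, Nat.card_coe_set_eq] at hcount
  change _ = ∑ c : (F.induce Sᶜ).ConnectedComponent,
    c.supp.ncard * (Sᶜ.ncard - c.supp.ncard) at hcount
  omega

theorem Nat.choose_two_add_two (n : ℕ) : (n + 2).choose 2 = n.choose 2 + (2 * n + 1) := by
  simp only [Nat.choose_succ_succ, Nat.choose_one_right, Nat.choose_zero_right]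
  ring

theorem sub_one_add_mul_le_mul_sub {d m r : ℕ} (hd : 1 ≤ d) (hr : r + 1 ≤ m - d) :
    m - 1 + r * (d - 1) ≤ d * (m - d) := by
  obtain ⟨a, rfl⟩ := Nat.exists_eq_add_of_le' hd
  obtain ⟨b, rfl⟩ := Nat.exists_eq_add_of_le (show a + 1 ≤ m by omega)
  simp only [Nat.add_sub_cancel, Nat.add_sub_cancel_left] at hr ⊢
  rw [show a + 1 + b - 1 = a + b by omega]
  nlinarith

theorem three_mul_sub_three_le_mul_sub {d m : ℕ} (hd : 3 ≤ d) (hm : d + 3 ≤ m) :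
    3 * (m - 3) ≤ d * (m - d) := by
  obtain ⟨b, rfl⟩ := Nat.exists_eq_add_of_le hm
  rw [show d + 3 + b - 3 = d + b by omega, show d + 3 + b - d = b + 3 by omega]
  nlinarith

section Parts

variable {ι : Type*} [Fintype ι] {d : ι → ℕ}

theorem sum_sub_one_add_card (hd : ∀ i, 1 ≤ d i) :
    ∑ i, (d i - 1) + Fintype.card ι = ∑ i, d i := by
  rw [← card_univ, card_eq_sum_ones, ← sum_add_distrib]
  exact sum_congr rfl fun i _ => Nat.sub_add_cancel (hd i)

theorem card_sub_one_le_sum_sub (hd : ∀ i, 1 ≤ d i) (i : ι) :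
    Fintype.card ι - 1 ≤ ∑ j, d j - d i := by
  classical
  have hrest : #(univ.erase i) ≤ ∑ j ∈ univ.erase i, d j := by
    simpa using card_nsmul_le_sum (univ.erase i) d 1 fun j _ => hd j
  rw [← add_sum_erase univ d (mem_univ i), card_erase_of_mem (mem_univ i)] at *
  simpa using hrest

theorem card_mul_add_le_sum_mul_sub {s : ℕ} (hd : ∀ i, 1 ≤ d i)
    (hq : Fintype.card ι = s + 2) :
    (s + 2) * (∑ j, d j - 1) + s * ∑ i, (d i - 1) ≤ ∑ i, d i * (∑ j, d j - d i) := by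
  calc (s + 2) * (∑ j, d j - 1) + s * ∑ i, (d i - 1)
      = ∑ i, (∑ j, d j - 1 + s * (d i - 1)) := by
        rw [sum_add_distrib, sum_const, card_univ, hq, smul_eq_mul, mul_sum]
    _ ≤ _ := sum_le_sum fun i _ =>
        sub_one_add_mul_le_mul_sub (hd i) (by have := card_sub_one_le_sum_sub hd i; omega)

theorem six_mul_sub_three_le_sum_mul_sub {i j : ι} (hij : i ≠ j) (hi : 3 ≤ d i)
    (hj : 3 ≤ d j) : 6 * (∑ l, d l - 3) ≤ ∑ l, d l * (∑ l', d l' - d l) := by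
  classical
  have hpair : d i + d j ≤ ∑ l, d l := by
    rw [← sum_pair hij]
    exact sum_le_sum_of_subset (subset_univ _)
  calc 6 * (∑ l, d l - 3)
      ≤ d i * (∑ l, d l - d i) + d j * (∑ l, d l - d j) := by
        have := three_mul_sub_three_le_mul_sub hi (show d i + 3 ≤ ∑ l, d l by omega)
        have := three_mul_sub_three_le_mul_sub hj (show d j + 3 ≤ ∑ l, d l by omega)
        omega
    _ = ∑ l ∈ {i, j}, d l * (∑ l', d l' - d l) :=
        (sum_pair (f := fun l => d l * (∑ l', d l' - d l)) hij).symm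
    _ ≤ _ := sum_le_sum_of_subset (subset_univ _)

theorem sum_sub_one_eq_two_mul_sum_half (hodd : ∀ i, Odd (d i)) :
    ∑ i, (d i - 1) = 2 * ∑ i, (d i - 1) / 2 := by
  rw [mul_sum]
  exact sum_congr rfl fun i _ =>
    (Nat.two_mul_div_two_of_even (Nat.Odd.sub_odd (hodd i) odd_one)).symm

theorem le_one_and_subsingleton_of_sum_mul_sub_le {s k : ℕ} (hk : 6 ≤ k)
    (hodd : ∀ i, Odd (d i)) (hm : s + ∑ i, d i = 2 * k)
    (hT : s + ∑ i, (d i - 1) / 2 = k - 1) (hX : ∑ i, d i * (∑ j, d j - d i) ≤ 8 * k - 8) :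
    s ≤ 1 ∧ {i | 1 < d i}.Subsingleton := by
  have hpos : ∀ i, 1 ≤ d i := fun i => (hodd i).pos
  have hhalf := sum_sub_one_eq_two_mul_sum_half hodd
  have hq : Fintype.card ι = s + 2 := by
    have := sum_sub_one_add_card hpos
    omega
  have hs : s ≤ 1 := by
    by_contra! hs
    have hlow := card_mul_add_le_sum_mul_sub hpos hq
    rw [hhalf] at hlow
    generalize ∑ i, d i = m at *
    generalize ∑ i, (d i - 1) / 2 = t at *
    have : m - 1 + s + 1 = 2 * k := by omega
    have : 8 * k - 8 + 8 = 8 * k := by omega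
    have : s + t + 1 = k := by omega
    nlinarith
  refine ⟨hs, fun i hi j hj => by_contra fun hij => ?_⟩
  have h3 : ∀ i, 1 < d i → 3 ≤ d i := fun i h => by
    obtain ⟨r, hr⟩ := hodd i
    omega
  have := six_mul_sub_three_le_sum_mul_sub hij (h3 i hi) (h3 j hj)
  omega

end Parts

/-- Claims 3.1 and 3.2: let `k ≥ 6` and let `F` be a graph on `2k` vertices. Suppose `S` is a
set of vertices such that every connected component of `F - S` is factor-critical and
`|S| + Σᵢ (dᵢ - 1)/2 = k - 1`, where the `dᵢ` are the orders of the components of `F - S`.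
If `e(F) ≥ C(2k-2,2) + 1`, then `|S| ≤ 1` and at most one component of `F - S` has more than
one vertex (i.e. `d₂ = 1` when the orders are listed as `d₁ ≥ d₂ ≥ ⋯ ≥ d_q`). -/
theorem claim_S_le_one_and_d2_eq_one
    {V : Type*} [Fintype V] (k : ℕ) (hk : 6 ≤ k) (hV : Fintype.card V = 2 * k)
    (F : SimpleGraph V) (S : Set V)
    (hfc : ∀ K : (F.induce Sᶜ).ConnectedComponent,
      FactorCritical ((F.induce Sᶜ).induce K.supp))
    (hsum : S.ncard +
      ∑ᶠ K : (F.induce Sᶜ).ConnectedComponent, (K.supp.ncard - 1) / 2 = k - 1)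
    (he : (2 * k - 2).choose 2 + 1 ≤ F.edgeSet.ncard) :
    S.ncard ≤ 1 ∧
    {K : (F.induce Sᶜ).ConnectedComponent | 1 < K.supp.ncard}.Subsingleton := by
  classical
  have hcard : ∑ c : (F.induce Sᶜ).ConnectedComponent, c.supp.ncard = Sᶜ.ncard := by
    rw [sum_ncard_supp, Nat.card_coe_set_eq]
  have hm : S.ncard + ∑ c : (F.induce Sᶜ).ConnectedComponent, c.supp.ncard = 2 * k := by
    rw [hcard, Set.ncard_add_ncard_compl, Nat.card_eq_fintype_card, hV]
  have hX : ∑ c : (F.induce Sᶜ).ConnectedComponent, c.supp.ncard *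
      (∑ c' : (F.induce Sᶜ).ConnectedComponent, c'.supp.ncard - c.supp.ncard) ≤ 8 * k - 8 := by
    have hedges := two_mul_ncard_edgeSet_add_sum_le F S
    rw [hV, show 2 * k = 2 * k - 2 + 2 by omega, Nat.choose_two_add_two] at hedges
    rw [hcard]
    omega
  exact le_one_and_subsingleton_of_sum_mul_sub_le (d := fun c => c.supp.ncard) hk
    (fun c => (hfc c).odd_ncard_supp) hm (by rwa [finsum_eq_sum_of_fintype] at hsum) hX
end

section
/- Let k ≥ 4 and n ≥ 2k be integers. Let G be an edge-colored graph on n vertices containing no rainbow matching of size k, and let H be a rainbow representative subgraph of G. Suppose S ⊆ V(G) with |S| = k−1 is such that V(G) ∖ S is an independent set in H. If u and u′ are two distinct vertices of V(G) ∖ S with uu′ ∈ E(G), then the number of edges of H joining S to V(G) ∖ (S ∪ {u, u′}) is at most (n−k−1)(k−2) + 1. -/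
/-!
Let `f` be the edge of `H` carrying the color of `uu'`, and let `B = V ∖ (S ∪ {u, u'})`, so
`|B| = n - k - 1 ≥ k - 1 = |S|`. If more than `(n-k-1)(k-2) + 1` edges of `H` join `S` to `B`,
then even without `f` there are more than `|B| (|S| - 1)` of them. A set `A ⊆ S` violating
Hall's condition would cap this count at `(|S| - |A|)|B| + |A|(|A| - 1) ≤ |B| (|S| - 1)`, so
there is a matching of `H - f` saturating `S` into `B`. Its edges have distinct colors, all
different from the color of `uu'`, and together with `uu'` it is a rainbow matching of size `k`.
-/

open Finset

section Hall

variable {ι β : Type*} [Fintype ι] [DecidableEq β]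

theorem sum_card_le_of_card_biUnion_lt (N : ι → Finset β) {m : ℕ}
    (hN : ∀ i, #(N i) ≤ m) (hι : Fintype.card ι ≤ m) {A : Finset ι}
    (hA : #(A.biUnion N) < #A) :
    ∑ i, #(N i) ≤ m * (Fintype.card ι - 1) := by
  classical
  have hA_pos : 1 ≤ #A := by omega
  have hA_le : #A ≤ Fintype.card ι := card_le_univ A
  have hout : ∑ i ∈ Aᶜ, #(N i) ≤ (Fintype.card ι - #A) * m := by
    simpa [card_compl] using sum_le_card_nsmul Aᶜ (fun i => #(N i)) m fun i _ => hN i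
  have hin : ∑ i ∈ A, #(N i) ≤ #A * (#A - 1) := by
    refine (sum_le_card_nsmul A (fun i => #(N i)) (#A - 1) fun i hi => ?_).trans (by simp)
    have := card_le_card (subset_biUnion_of_mem N hi)
    omega
  calc ∑ i, #(N i) = ∑ i ∈ A, #(N i) + ∑ i ∈ Aᶜ, #(N i) := (sum_add_sum_compl A _).symm
    _ ≤ (#A - 1) * m + (Fintype.card ι - #A) * m := by
        refine add_le_add (hin.trans ?_) hout
        rw [mul_comm]
        exact Nat.mul_le_mul_left _ (hA_le.trans hι)
    _ = m * (Fintype.card ι - 1) := by rw [← add_mul, mul_comm]; congr 1; omega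

theorem exists_injective_of_mul_lt_sum_card (N : ι → Finset β) (m : ℕ)
    (hN : ∀ i, #(N i) ≤ m) (hι : Fintype.card ι ≤ m)
    (hsum : m * (Fintype.card ι - 1) < ∑ i, #(N i)) :
    ∃ g : ι → β, Function.Injective g ∧ ∀ i, g i ∈ N i := by
  refine (all_card_le_biUnion_card_iff_exists_injective N).mp fun A => ?_
  by_contra! hA
  exact (sum_card_le_of_card_biUnion_lt N hN hι hA).not_gt hsum

end Hall

section RainbowMatching

variable {V α : Type*}

def IsRainbowMatching (G : SimpleGraph V) (c : Sym2 V → α) (M : Finset (Sym2 V)) : Prop :=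
  ↑M ⊆ G.edgeSet ∧ (∀ e ∈ M, ∀ f ∈ M, e ≠ f → ∀ v : V, v ∈ e → v ∉ f) ∧ Set.InjOn c ↑M

variable {G H : SimpleGraph V} {c : Sym2 V → α} {M : Finset (Sym2 V)}

theorem IsRainbowMatching.mono (hM : IsRainbowMatching H c M) (hHG : H ≤ G) :
    IsRainbowMatching G c M :=
  ⟨hM.1.trans (SimpleGraph.edgeSet_mono hHG), hM.2⟩

theorem IsRainbowMatching.hasRainbowMatching_card_add_one [DecidableEq V]
    (hM : IsRainbowMatching G c M) {e : Sym2 V} (he : e ∈ G.edgeSet)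
    (hdisj : ∀ f ∈ M, ∀ v ∈ e, v ∉ f) (hc : ∀ f ∈ M, c f ≠ c e) :
    HasRainbowMatching G c (#M + 1) := by
  obtain ⟨hMG, hMdisj, hMc⟩ := hM
  have heM : e ∉ M := fun heM => by
    induction e using Sym2.ind with
    | h x y => exact hdisj _ heM x (Sym2.mem_mk_left x y) (Sym2.mem_mk_left x y)
  refine ⟨insert e M, card_insert_of_notMem heM, ?_, ?_, ?_⟩
  · simpa [Set.insert_subset_iff] using ⟨he, hMG⟩
  · simp only [mem_insert]
    rintro f (rfl | hf) f' (rfl | hf') hne v hv hv'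
    · exact hne rfl
    · exact hdisj f' hf' v hv hv'
    · exact hdisj f hf v hv' hv
    · exact hMdisj f hf f' hf' hne v hv hv'
  · rw [coe_insert, Set.injOn_insert (by simpa using heM)]
    exact ⟨hMc, fun ⟨f, hf, hcf⟩ => hc f hf hcf⟩

variable {ι : Type*} {p q : ι → V}

theorem injective_sym2_mk_of_injective_left (hp : Function.Injective p)
    (hpq : ∀ i j, p i ≠ q j) : Function.Injective fun i => s(p i, q i) := by
  intro i j hij
  rcases Sym2.eq_iff.mp hij with ⟨h, -⟩ | ⟨h, -⟩
  · exact hp h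
  · exact absurd h (hpq i j)

theorem isRainbowMatching_image_sym2_mk [Fintype ι] [DecidableEq V] (hp : Function.Injective p)
    (hq : Function.Injective q) (hpq : ∀ i j, p i ≠ q j) (hadj : ∀ i, H.Adj (p i) (q i))
    (hc : Set.InjOn c H.edgeSet) :
    IsRainbowMatching H c (univ.image fun i => s(p i, q i)) := by
  have hsub : ↑(univ.image fun i => s(p i, q i)) ⊆ H.edgeSet := by
    simpa [Set.subset_def] using hadj
  refine ⟨hsub, ?_, hc.mono hsub⟩
  simp only [mem_image, mem_univ, true_and]
  rintro _ ⟨i, rfl⟩ _ ⟨j, rfl⟩ hne v hv hv'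
  have hij : i ≠ j := fun h => hne (h ▸ rfl)
  rw [Sym2.mem_iff] at hv hv'
  rcases hv with rfl | rfl <;> rcases hv' with h | h
  · exact hij (hp h)
  · exact hpq i j h
  · exact hpq j i h.symm
  · exact hij (hq h)

end RainbowMatching

section EdgesBetween

variable {V α : Type*}

def edgesBetween (H : SimpleGraph V) (S B : Finset V) : Set (Sym2 V) :=
  {e ∈ H.edgeSet | ∃ a ∈ S, ∃ b ∈ B, e = s(a, b)}

theorem ncard_edgesBetween_le_sum [DecidableEq V] (H : SimpleGraph V) [DecidableRel H.Adj]
    (S B : Finset V) : (edgesBetween H S B).ncard ≤ ∑ a ∈ S, #{b ∈ B | H.Adj a b} := by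
  calc (edgesBetween H S B).ncard
      ≤ (↑(S.biUnion fun a => {b ∈ B | H.Adj a b}.image fun b => s(a, b)) :
          Set (Sym2 V)).ncard := by
        refine Set.ncard_le_ncard ?_ (Set.toFinite _)
        rintro _ ⟨hab, a, ha, b, hb, rfl⟩
        simp only [coe_biUnion, coe_image, coe_filter, Set.mem_iUnion, Set.mem_image]
        exact ⟨a, ha, b, ⟨hb, hab⟩, rfl⟩
    _ ≤ ∑ a ∈ S, #({b ∈ B | H.Adj a b}.image fun b => s(a, b)) := by
        rw [Set.ncard_coe_finset]; exact card_biUnion_le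
    _ ≤ ∑ a ∈ S, #{b ∈ B | H.Adj a b} := sum_le_sum fun a _ => card_image_le

theorem ncard_sep_edgeSet_le_deleteEdges_add_one [Finite V] (H : SimpleGraph V) (f : Sym2 V)
    (P : Sym2 V → Prop) :
    {e ∈ H.edgeSet | P e}.ncard ≤ {e ∈ (H.deleteEdges {f}).edgeSet | P e}.ncard + 1 := by
  refine (Set.ncard_le_ncard (t := insert f {e ∈ (H.deleteEdges {f}).edgeSet | P e}) ?_).trans
    (Set.ncard_insert_le _ _)
  rintro e ⟨he, hP⟩
  by_cases hef : e = f
  · exact Or.inl hef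
  · exact Or.inr ⟨by simpa [H.edgeSet_deleteEdges] using ⟨he, hef⟩, hP⟩

theorem color_ne_of_mem_edgeSet_deleteEdges {H : SimpleGraph V} {c : Sym2 V → α}
    (hc : Set.InjOn c H.edgeSet) {e f : Sym2 V} (hf : f ∈ H.edgeSet)
    (he : e ∈ (H.deleteEdges {f}).edgeSet) : c e ≠ c f := by
  rw [H.edgeSet_deleteEdges] at he
  exact fun h => he.2 (hc he.1 hf h)

theorem hasRainbowMatching_card_add_one_of_ncard_edgesBetween [Finite V] [DecidableEq V]
    {G H : SimpleGraph V} {c : Sym2 V → α} (hrep : IsRainbowRepresentative G H c)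
    {S B : Finset V} (hSB : Disjoint S B) (hcard : #S ≤ #B) {u u' : V} (hadj : G.Adj u u')
    (hu : u ∉ S ∪ B) (hu' : u' ∉ S ∪ B)
    (hmany : #B * (#S - 1) + 1 < (edgesBetween H S B).ncard) :
    HasRainbowMatching G c (#S + 1) := by
  classical
  obtain ⟨hHG, hc, hcolor⟩ := hrep
  obtain ⟨f, hf, hcf⟩ := hcolor s(u, u') hadj
  set H' := H.deleteEdges {f}
  have hcount : (edgesBetween H S B).ncard ≤ ∑ a : S, #{b ∈ B | H'.Adj a b} + 1 := by
    rw [sum_coe_sort S fun a => #{b ∈ B | H'.Adj a b}]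
    exact (ncard_sep_edgeSet_le_deleteEdges_add_one H f _).trans
      (Nat.add_le_add_right (ncard_edgesBetween_le_sum H' S B) 1)
  obtain ⟨g, hg, hgN⟩ := exists_injective_of_mul_lt_sum_card
    (fun a : S => {b ∈ B | H'.Adj a b}) #B (fun a => card_filter_le _ _)
    (by rwa [Fintype.card_coe]) (by rw [Fintype.card_coe]; omega)
  simp only [mem_filter] at hgN
  have hval_ne_g : ∀ a b : S, a.1 ≠ g b := fun a b h =>
    disjoint_left.mp hSB a.2 (h ▸ (hgN b).1)
  have hM := isRainbowMatching_image_sym2_mk Subtype.val_injective hg hval_ne_g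
    (fun a => (hgN a).2) (hc.mono (SimpleGraph.edgeSet_mono (SimpleGraph.deleteEdges_le _)))
  have hmatch :=
    (hM.mono ((SimpleGraph.deleteEdges_le _).trans hHG)).hasRainbowMatching_card_add_one hadj
      ?disj fun e he => hcf ▸ color_ne_of_mem_edgeSet_deleteEdges hc hf (hM.1 he)
  · rwa [card_image_of_injective _ (injective_sym2_mk_of_injective_left Subtype.val_injective
      hval_ne_g), card_univ, Fintype.card_coe] at hmatch
  case disj =>
    simp only [mem_image, mem_univ, true_and]
    rintro _ ⟨a, rfl⟩ v hv
    have hoff : ∀ x ∉ S ∪ B, ¬(x = a ∨ x = g a) := by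
      rintro x hx (rfl | rfl)
      exacts [hx (mem_union_left _ a.2), hx (mem_union_right _ (hgN a).1)]
    rw [Sym2.mem_iff] at hv ⊢
    rcases hv with rfl | rfl
    exacts [hoff _ hu, hoff _ hu']

end EdgesBetween

theorem claim_edges_between_S_and_rest_general
    {V α : Type*} [Fintype V] (k n : ℕ) (hk : 4 ≤ k) (hn : 2 * k ≤ n)
    (hV : Fintype.card V = n)
    (G H : SimpleGraph V) (c : Sym2 V → α)
    (hno : ¬ HasRainbowMatching G c k)
    (hrep : IsRainbowRepresentative G H c)
    (S : Set V) (hS : S.ncard = k - 1)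
    (u u' : V) (hu : u ∉ S) (hu' : u' ∉ S) (huu' : u ≠ u') (hadj : G.Adj u u') :
    {e ∈ H.edgeSet | ∃ a ∈ S, ∃ b : V, b ∉ S ∧ b ≠ u ∧ b ≠ u' ∧ e = s(a, b)}.ncard
      ≤ (n - k - 1) * (k - 2) + 1 := by
  classical
  set B : Finset V := (S.toFinsetᶜ.erase u).erase u' with hB
  have hmemB : ∀ b, b ∈ B ↔ b ∉ S ∧ b ≠ u ∧ b ≠ u' := by
    intro b; simp only [hB, mem_erase, mem_compl, Set.mem_toFinset]; tauto
  have hSk : #S.toFinset = k - 1 := by rw [← Set.ncard_eq_toFinset_card']; exact hS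
  have hBcard : #B = n - k - 1 := by
    rw [hB, card_erase_of_mem (by simp [huu'.symm, hu']), card_erase_of_mem (by simp [hu]),
      card_compl, hV, hSk]
    omega
  have hedges : {e ∈ H.edgeSet | ∃ a ∈ S, ∃ b : V, b ∉ S ∧ b ≠ u ∧ b ≠ u' ∧ e = s(a, b)} =
      edgesBetween H S.toFinset B := by
    simp only [edgesBetween, Set.mem_toFinset, hmemB, and_assoc]
  rw [hedges]
  by_contra! hmany
  have hmatch := hasRainbowMatching_card_add_one_of_ncard_edgesBetween hrep
    (disjoint_left.mpr fun a ha hb => ((hmemB a).mp hb).1 (Set.mem_toFinset.mp ha))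
    (by omega) hadj (by simp [hu, hmemB]) (by simp [hu', hmemB])
    (by rwa [hBcard, hSk, show k - 1 - 1 = k - 2 by omega])
  exact hno (by rwa [hSk, Nat.sub_add_cancel (by omega)] at hmatch)

/-- Claim (Case `s = k-1`): let `k ≥ 4`, `n ≥ 2k`, let `G` be an edge-colored graph on `n`
vertices with no rainbow matching of size `k`, and let `H` be a rainbow representative
subgraph of `G`. Suppose `S` has `k-1` vertices and `V ∖ S` is independent in `H`. If
`u ≠ u'` lie outside `S` and `uu' ∈ E(G)`, then the number of edges of `H` joining `S` to
`V ∖ (S ∪ {u, u'})` is at most `(n-k-1)(k-2) + 1`. -/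
theorem claim_edges_between_S_and_rest
    {V α : Type*} [Fintype V] (k n : ℕ) (hk : 4 ≤ k) (hn : 2 * k ≤ n)
    (hV : Fintype.card V = n)
    (G H : SimpleGraph V) (c : Sym2 V → α)
    (hno : ¬ HasRainbowMatching G c k)
    (hrep : IsRainbowRepresentative G H c)
    (S : Set V) (hS : S.ncard = k - 1)
    (hindep : ∀ a ∉ S, ∀ b ∉ S, ¬ H.Adj a b)
    (u u' : V) (hu : u ∉ S) (hu' : u' ∉ S) (huu' : u ≠ u') (hadj : G.Adj u u') :
    {e ∈ H.edgeSet | ∃ a ∈ S, ∃ b : V, b ∉ S ∧ b ≠ u ∧ b ≠ u' ∧ e = s(a, b)}.ncard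
      ≤ (n - k - 1) * (k - 2) + 1 :=
  claim_edges_between_S_and_rest_general k n hk hn hV G H c hno hrep S hS u u' hu hu' huu' hadj
end

section
/- Let k ≥ 3 be an integer. Let G be an edge-colored graph containing no rainbow matching of size k, and let H be a rainbow representative subgraph of G. Suppose W ⊆ V(G) with |W| = 2k−1 is such that every edge of H has both endpoints in W. If there exist vertices w ∈ W and u ∈ V(G) ∖ W with uw ∈ E(G), then the number of edges of H not incident to w is at most C(2k−3,2) + 1. -/
/-!
Let `f₀` be the edge of `H` with the colour of `uw`. The edges of `H` avoiding `w` and `f₀` live on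
the `2k - 2` vertices of `W \ {w}`, and on `n ≥ 2m` vertices more than `(m - 1)(n - 1)` edges
contain `m` disjoint ones: if a maximum set of disjoint edges has `t < m` edges covering `T`, then
every edge meets `T`, at most `C(2t, 2)` edges lie inside `T`, and each of the `t` chosen edges `ab`
has at most `n - 2t` edges to the outside (two edges `ax`, `by` with `x ≠ y` would let `ab` be
swapped for them), `t (n - 1)` in all. With `m = k - 1` this gives, when more than
`C(2k - 3, 2) + 1` edges of `H` avoid `w`, `k - 1` disjoint edges of `H` avoiding `w` and `f₀`;
as `H` is rainbow, adding `uw` yields a rainbow matching of size `k` in `G`.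
-/

section

open Finset

variable {V : Type*}

def IsVertexDisjoint (M : Finset (Sym2 V)) : Prop :=
  ∀ e ∈ M, ∀ f ∈ M, e ≠ f → ∀ v : V, v ∈ e → v ∉ f

namespace IsVertexDisjoint

lemma mono {M N : Finset (Sym2 V)} (hM : IsVertexDisjoint M) (hNM : N ⊆ M) :
    IsVertexDisjoint N :=
  fun e he f hf => hM e (hNM he) f (hNM hf)

lemma notMem_of_forall_notMem {M : Finset (Sym2 V)} {f : Sym2 V}
    (hf : ∀ v ∈ f, ∀ e ∈ M, v ∉ e) : f ∉ M :=
  fun h => hf _ f.out_fst_mem f h f.out_fst_mem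

variable [DecidableEq V]

lemma insert {M : Finset (Sym2 V)} {f : Sym2 V} (hM : IsVertexDisjoint M)
    (hf : ∀ v ∈ f, ∀ e ∈ M, v ∉ e) : IsVertexDisjoint (insert f M) := by
  intro e he g hg hne v hv
  rw [mem_insert] at he hg
  rcases he with rfl | he <;> rcases hg with rfl | hg
  · exact absurd rfl hne
  · exact hf v hv g hg
  · exact fun hvg => hf v hvg e he hv
  · exact hM e he g hg hne v hv

lemma card_biUnion_toFinset {M : Finset (Sym2 V)} (hM : IsVertexDisjoint M)
    (hdiag : ∀ e ∈ M, ¬ e.IsDiag) : #(M.biUnion Sym2.toFinset) = 2 * #M := by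
  rw [card_biUnion, sum_congr rfl fun e he => Sym2.card_toFinset_of_not_isDiag e (hdiag e he),
    sum_const, smul_eq_mul, mul_comm]
  exact fun e he f hf hef => disjoint_left.2 fun v hve hvf =>
    hM e he f hf hef v (Sym2.mem_toFinset.1 hve) (Sym2.mem_toFinset.1 hvf)

lemma exists_card_eq_succ_of_swap {F M : Finset (Sym2 V)} {a b x y : V} (hM : IsVertexDisjoint M)
    (hMF : M ⊆ F) (hab : a ≠ b) (habM : s(a, b) ∈ M) (haxF : s(a, x) ∈ F) (hbyF : s(b, y) ∈ F)
    (hxy : x ≠ y) (hx : ∀ e ∈ M, x ∉ e) (hy : ∀ e ∈ M, y ∉ e) :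
    ∃ N ⊆ F, IsVertexDisjoint N ∧ #N = #M + 1 := by
  have hrest : ∀ e ∈ M.erase s(a, b), a ∉ e ∧ b ∉ e ∧ x ∉ e ∧ y ∉ e := fun e he =>
    have hne := (ne_of_mem_erase he).symm
    have he := mem_of_mem_erase he
    ⟨hM _ habM e he hne a (Sym2.mem_mk_left a b), hM _ habM e he hne b (Sym2.mem_mk_right a b),
      hx e he, hy e he⟩
  have hxb : x ≠ b := fun h => hx _ habM (h ▸ Sym2.mem_mk_right a b)
  have hya : y ≠ a := fun h => hy _ habM (h ▸ Sym2.mem_mk_left a b)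
  have hby : ∀ v ∈ s(b, y), ∀ e ∈ M.erase s(a, b), v ∉ e := by
    rintro v hv e he
    rcases Sym2.mem_iff.1 hv with rfl | rfl
    exacts [(hrest e he).2.1, (hrest e he).2.2.2]
  have hax : ∀ v ∈ s(a, x), ∀ e ∈ Insert.insert s(b, y) (M.erase s(a, b)), v ∉ e := by
    rintro v hv e he
    rcases mem_insert.1 he with rfl | he <;> rcases Sym2.mem_iff.1 hv with rfl | rfl
    · simp [hab, hya.symm]
    · simp [hxb, hxy]
    exacts [(hrest e he).1, (hrest e he).2.2.1]
  refine ⟨_, insert_subset haxF (insert_subset hbyF ((erase_subset _ _).trans hMF)),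
    ((hM.mono (erase_subset _ _)).insert hby).insert hax, ?_⟩
  rw [card_insert_of_notMem (notMem_of_forall_notMem hax),
    card_insert_of_notMem (notMem_of_forall_notMem hby), card_erase_of_mem habM]
  have := card_pos.2 ⟨_, habM⟩
  omega

end IsVertexDisjoint

lemma Finset.card_filter_not_isDiag_sym2 [DecidableEq V] (s : Finset V) :
    #{e ∈ s.sym2 | ¬ e.IsDiag} = (#s).choose 2 := by
  rw [sym2_eq_image, Sym2.filter_image_mk_not_isDiag, Sym2.card_image_offDiag]

lemma Finset.card_add_card_le_of_forall_eq {U A B : Finset V} (hA : A ⊆ U) (hB : B ⊆ U)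
    (hU : 2 ≤ #U) (h : ∀ x ∈ A, ∀ y ∈ B, x = y) : #A + #B ≤ #U := by
  rcases A.eq_empty_or_nonempty with rfl | ⟨x, hx⟩
  · simpa using card_le_card hB
  rcases B.eq_empty_or_nonempty with rfl | ⟨y, hy⟩
  · simpa using card_le_card hA
  have hA1 : #A ≤ 1 := card_le_one.2 fun p hp q hq => (h p hp y hy).trans (h q hq y hy).symm
  have hB1 : #B ≤ 1 := card_le_one.2 fun p hp q hq => (h x hx p hp).symm.trans (h x hx q hq)
  omega

def IsMaximumVertexDisjoint (F M : Finset (Sym2 V)) : Prop :=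
  M ⊆ F ∧ IsVertexDisjoint M ∧ ∀ N ⊆ F, IsVertexDisjoint N → #N ≤ #M

namespace IsMaximumVertexDisjoint

variable [DecidableEq V] {S : Finset V} {F M : Finset (Sym2 V)}

lemma exists_mem_biUnion_toFinset (h : IsMaximumVertexDisjoint F M) {f : Sym2 V} (hf : f ∈ F) :
    ∃ v ∈ f, v ∈ M.biUnion Sym2.toFinset := by
  by_contra! hfree
  have hdisj : ∀ v ∈ f, ∀ e ∈ M, v ∉ e := fun v hv e he hve =>
    hfree v hv (mem_biUnion.2 ⟨e, he, Sym2.mem_toFinset.2 hve⟩)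
  have := h.2.2 _ (insert_subset hf h.1) (h.2.1.insert hdisj)
  rw [card_insert_of_notMem (IsVertexDisjoint.notMem_of_forall_notMem hdisj)] at this
  omega

open scoped Classical in
lemma card_crossing_le (h : IsMaximumVertexDisjoint F M) (hFS : F ⊆ S.sym2) {a b : V}
    (hab : a ≠ b) (habM : s(a, b) ∈ M) (hU : 2 ≤ #(S \ M.biUnion Sym2.toFinset)) :
    #{f ∈ F | (∃ v ∈ s(a, b), v ∈ f) ∧ ∃ x ∈ f, x ∉ M.biUnion Sym2.toFinset} ≤
      #(S \ M.biUnion Sym2.toFinset) := by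
  obtain ⟨hMF, hM, hmax⟩ := h
  set T := M.biUnion Sym2.toFinset
  set U := S \ T
  have hT : ∀ {v e}, e ∈ M → v ∈ e → v ∈ T := fun he hv =>
    mem_biUnion.2 ⟨_, he, Sym2.mem_toFinset.2 hv⟩
  have hUfree : ∀ x ∈ U, ∀ e ∈ M, x ∉ e := fun x hx e he hxe => (mem_sdiff.1 hx).2 (hT he hxe)
  set A := {x ∈ U | s(a, x) ∈ F}
  set B := {x ∈ U | s(b, x) ∈ F}
  have hcover : {f ∈ F | (∃ v ∈ s(a, b), v ∈ f) ∧ ∃ x ∈ f, x ∉ T} ⊆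
      A.image (fun x => s(a, x)) ∪ B.image (fun x => s(b, x)) := by
    intro f hf
    obtain ⟨hfF, ⟨v, hv, hvf⟩, x, hxf, hxT⟩ := mem_filter.1 hf
    have hvx : v ≠ x := fun hvx => hxT (hvx ▸ hT habM hv)
    have hxU : x ∈ U := mem_sdiff.2 ⟨mem_sym2_iff.1 (hFS hfF) x hxf, hxT⟩
    rw [(Sym2.mem_and_mem_iff hvx).1 ⟨hvf, hxf⟩] at hfF ⊢
    rcases Sym2.mem_iff.1 hv with rfl | rfl
    · exact mem_union_left _ (mem_image_of_mem _ (mem_filter.2 ⟨hxU, hfF⟩))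
    · exact mem_union_right _ (mem_image_of_mem _ (mem_filter.2 ⟨hxU, hfF⟩))
  have hsame : ∀ x ∈ A, ∀ y ∈ B, x = y := by
    intro x hx y hy
    by_contra hxy
    obtain ⟨hxU, hax⟩ := mem_filter.1 hx
    obtain ⟨hyU, hby⟩ := mem_filter.1 hy
    obtain ⟨N, hNF, hN, hNcard⟩ := hM.exists_card_eq_succ_of_swap hMF hab habM hax hby hxy
      (hUfree x hxU) (hUfree y hyU)
    have := hmax N hNF hN
    omega
  calc _ ≤ #(A.image (fun x => s(a, x)) ∪ B.image (fun x => s(b, x))) := card_le_card hcover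
    _ ≤ #A + #B := (card_union_le _ _).trans (add_le_add card_image_le card_image_le)
    _ ≤ #U := card_add_card_le_of_forall_eq (filter_subset _ _) (filter_subset _ _) hU hsame

lemma card_le_mul (h : IsMaximumVertexDisjoint F M) (hFS : F ⊆ S.sym2)
    (hF : ∀ e ∈ F, ¬ e.IsDiag) (hS : 2 * #M + 2 ≤ #S) : #F ≤ #M * (#S - 1) := by
  classical
  set T := M.biUnion Sym2.toFinset
  have hTS : T ⊆ S := biUnion_subset.2 fun e he v hv =>
    mem_sym2_iff.1 (hFS (h.1 he)) v (Sym2.mem_toFinset.1 hv)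
  have hT : #T = 2 * #M := h.2.1.card_biUnion_toFinset fun e he => hF e (h.1 he)
  have hU : #(S \ T) = #S - 2 * #M := by rw [card_sdiff_of_subset hTS, hT]
  set crossing := fun e : Sym2 V => {f ∈ F | (∃ v ∈ e, v ∈ f) ∧ ∃ x ∈ f, x ∉ T}
  have hcover : F ⊆ {e ∈ T.sym2 | ¬ e.IsDiag} ∪ M.biUnion crossing := by
    intro f hf
    by_cases hfT : ∀ x ∈ f, x ∈ T
    · exact mem_union_left _ (mem_filter.2 ⟨mem_sym2_iff.2 hfT, hF f hf⟩)
    push Not at hfT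
    obtain ⟨v, hvf, hvT⟩ := h.exists_mem_biUnion_toFinset hf
    obtain ⟨e, he, hve⟩ := mem_biUnion.1 hvT
    exact mem_union_right _ (mem_biUnion.2
      ⟨e, he, show f ∈ crossing e from mem_filter.2 ⟨hf, ⟨v, Sym2.mem_toFinset.1 hve, hvf⟩, hfT⟩⟩)
  have hcross : ∀ e ∈ M, #(crossing e) ≤ #(S \ T) := by
    intro e he
    induction e with | _ a b => ?_
    have hab : a ≠ b := fun hab => hF _ (h.1 he) (Sym2.mk_isDiag_iff.2 hab)
    exact h.card_crossing_le hFS hab he (by rw [hU]; omega)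
  calc #F ≤ #{e ∈ T.sym2 | ¬ e.IsDiag} + #(M.biUnion crossing) :=
        (card_le_card hcover).trans (card_union_le _ _)
    _ ≤ (2 * #M).choose 2 + #M * (#S - 2 * #M) := by
        rw [card_filter_not_isDiag_sym2, hT, ← hU]
        gcongr
        exact card_biUnion_le_card_mul _ _ _ hcross
    _ = #M * (#S - 1) := by
        rcases Nat.eq_zero_or_pos #M with h0 | hpos
        · simp [h0]
        rw [Nat.choose_two_right, mul_assoc, Nat.mul_div_cancel_left _ two_pos, ← mul_add]
        congr 1
        omega

end IsMaximumVertexDisjoint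

theorem exists_isVertexDisjoint_card_eq [DecidableEq V] {S : Finset V} {F : Finset (Sym2 V)}
    {m : ℕ} (hFS : F ⊆ S.sym2) (hF : ∀ e ∈ F, ¬ e.IsDiag) (hm : 2 * m ≤ #S)
    (hcard : (m - 1) * (#S - 1) < #F) : ∃ M ⊆ F, IsVertexDisjoint M ∧ #M = m := by
  classical
  obtain ⟨M, hM, hmax⟩ := exists_max_image {M ∈ F.powerset | IsVertexDisjoint M} card
    ⟨∅, mem_filter.2 ⟨empty_mem_powerset _, by simp [IsVertexDisjoint]⟩⟩
  obtain ⟨hMF, hMdisj⟩ := mem_filter.1 hM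
  have hmaxM : IsMaximumVertexDisjoint F M := ⟨mem_powerset.1 hMF, hMdisj,
    fun N hNF hN => hmax N (mem_filter.2 ⟨mem_powerset.2 hNF, hN⟩)⟩
  by_cases hmM : m ≤ #M
  · obtain ⟨N, hNM, hN⟩ := exists_subset_card_eq hmM
    exact ⟨N, hNM.trans hmaxM.1, hMdisj.mono hNM, hN⟩
  have := hmaxM.card_le_mul hFS hF (by omega)
  have := Nat.mul_le_mul_right (#S - 1) (show #M ≤ m - 1 by omega)
  omega

lemma IsRainbowRepresentative.hasRainbowMatching_insert_s11 [DecidableEq V] {α : Type*}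
    {G H : SimpleGraph V} {c : Sym2 V → α} (hrep : IsRainbowRepresentative G H c)
    {M : Finset (Sym2 V)} (hMH : ↑M ⊆ H.edgeSet) (hM : IsVertexDisjoint M) {e f : Sym2 V}
    (he : e ∈ G.edgeSet) (hf : f ∈ H.edgeSet) (hcf : c e = c f) (hfM : f ∉ M)
    (hdisj : ∀ v ∈ e, ∀ g ∈ M, v ∉ g) : HasRainbowMatching G c (#M + 1) := by
  have heM := IsVertexDisjoint.notMem_of_forall_notMem hdisj
  refine ⟨insert e M, card_insert_of_notMem heM, ?_, hM.insert hdisj, ?_⟩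
  · rw [coe_insert]
    exact Set.insert_subset he (hMH.trans (SimpleGraph.edgeSet_mono hrep.1))
  · rw [coe_insert, Set.injOn_insert (mem_coe.not.2 heM)]
    refine ⟨hrep.2.1.mono hMH, ?_⟩
    rintro ⟨g, hg, hcg⟩
    exact hfM (hrep.2.1 hf (hMH hg) (hcf ▸ hcg.symm) ▸ hg)

lemma Nat.choose_two_two_mul_sub_three (k : ℕ) :
    (2 * k - 3).choose 2 = (k - 2) * (2 * k - 3) := by
  rw [Nat.choose_two_right, mul_comm, show 2 * k - 3 - 1 = 2 * (k - 2) by omega, mul_assoc,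
    Nat.mul_div_cancel_left _ two_pos]

end

/-- Claim 3.8: let `k ≥ 3`, let `G` be an edge-colored graph with no rainbow matching of
size `k`, and let `H` be a rainbow representative subgraph of `G`. Suppose `W` is a set of
`2k-1` vertices containing both endpoints of every edge of `H`. If some `w ∈ W` is joined in
`G` to some `u ∉ W`, then the number of edges of `H` not incident to `w` is at most
`C(2k-3,2) + 1`. -/
theorem claim_edges_avoiding_w
    {V α : Type*} [Fintype V] (k : ℕ) (hk : 3 ≤ k)
    (G H : SimpleGraph V) (c : Sym2 V → α)
    (hno : ¬ HasRainbowMatching G c k)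
    (hrep : IsRainbowRepresentative G H c)
    (W : Set V) (hW : W.ncard = 2 * k - 1)
    (hHW : ∀ e ∈ H.edgeSet, ∀ v ∈ e, v ∈ W)
    (w : V) (hw : w ∈ W) (u : V) (hu : u ∉ W) (hadj : G.Adj u w) :
    {e ∈ H.edgeSet | w ∉ e}.ncard ≤ (2 * k - 3).choose 2 + 1 := by
  classical
  obtain ⟨f₀, hf₀, hcf₀⟩ := hrep.2.2 s(u, w) hadj
  set F := {e ∈ H.edgeSet | w ∉ e}.toFinset.erase f₀
  set S := W.toFinset.erase w
  have hF : ∀ e ∈ F, e ∈ H.edgeSet ∧ w ∉ e := fun e he => by simpa using Finset.mem_of_mem_erase he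
  have hFS : F ⊆ S.sym2 := fun e he => Finset.mem_sym2_iff.2 fun v hv => Finset.mem_erase.2
    ⟨fun hvw => (hF e he).2 (hvw ▸ hv), Set.mem_toFinset.2 (hHW e (hF e he).1 v hv)⟩
  have hS : S.card = 2 * (k - 1) := by
    rw [Finset.card_erase_of_mem (Set.mem_toFinset.2 hw), ← Set.ncard_eq_toFinset_card', hW]
    omega
  by_contra! hlt
  have hcard : (k - 1 - 1) * (S.card - 1) < F.card := by
    have : {e ∈ H.edgeSet | w ∉ e}.ncard - 1 ≤ F.card := by
      rw [Set.ncard_eq_toFinset_card']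
      exact Finset.pred_card_le_card_erase
    rw [hS, show 2 * (k - 1) - 1 = 2 * k - 3 by omega, show k - 1 - 1 = k - 2 by omega,
      ← Nat.choose_two_two_mul_sub_three]
    omega
  obtain ⟨M, hMF, hM, hMk⟩ := exists_isVertexDisjoint_card_eq hFS
    (fun e he => H.not_isDiag_of_mem_edgeSet (hF e he).1) (by omega) hcard
  have huw : ∀ v ∈ s(u, w), ∀ g ∈ M, v ∉ g := by
    intro v hv g hg hvg
    rcases Sym2.mem_iff.1 hv with rfl | rfl
    exacts [hu (hHW g (hF g (hMF hg)).1 v hvg), (hF g (hMF hg)).2 hvg]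
  have hrainbow := hrep.hasRainbowMatching_insert_s11 (fun e he => (hF e (hMF he)).1) hM hadj hf₀
    hcf₀ (fun h => Finset.notMem_erase f₀ _ (hMF h)) huw
  rw [hMk, Nat.sub_add_cancel (by omega)] at hrainbow
  exact hno hrainbow
end
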